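/- arXiv:1911.08919 — 4 statements merged into one kernel-verified Lean document; each statement's English description precedes it below -/
import Mathlib

section
/- For all A, B ∈ ℂ with Re(A · conj(B)) ≥ 0, the log-euclidean distance is given by dLE(A, B) = |A² − B²|. -/
open Complex Set

/-- A path `γ : [0,1] → ℂ` is piecewise C¹: continuous on `[0,1]` and C¹ on the
pieces of a finite partition `0 = s 0 < s 1 < ⋯ < s n = 1`. -/
def PiecewiseC1 (γ : ℝ → ℂ) : Prop :=
  ContinuousOn γ (Set.Icc 0 1) ∧
    ∃ (n : ℕ) (s : Fin (n + 1) → ℝ), StrictMono s ∧ s 0 = 0 ∧ s (Fin.last n) = 1 ∧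
      ∀ i : Fin n, ContDiffOn ℝ 1 γ (Set.Icc (s i.castSucc) (s i.succ))

/-- The log-euclidean length of a path: the euclidean length of `t ↦ γ(t)²`. -/
noncomputable def LELength (γ : ℝ → ℂ) : ℝ :=
  ∫ t in (0:ℝ)..1, 2 * ‖γ t‖ * ‖deriv γ t‖

/-- The log-euclidean distance: infimum of log-euclidean lengths of piecewise C¹ paths. -/
noncomputable def dLE (A B : ℂ) : ℝ :=
  sInf {L : ℝ | ∃ γ : ℝ → ℂ, PiecewiseC1 γ ∧ γ 0 = A ∧ γ 1 = B ∧ LELength γ = L}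

/-- A geodesic from `A` to `B` in the log-euclidean plane. -/
def IsLEGeodesic (A B : ℂ) (γ : ℝ → ℂ) : Prop :=
  γ 0 = A ∧ γ (dLE A B) = B ∧
    ∀ s ∈ Set.Icc (0:ℝ) (dLE A B), ∀ t ∈ Set.Icc (0:ℝ) (dLE A B),
      dLE (γ s) (γ t) = |s - t|

namespace DLEProof
open MeasureTheory intervalIntegral

lemma piece_bound {γ : ℝ → ℂ} {a b : ℝ} (hab : a < b)
    (hγ : ContDiffOn ℝ 1 γ (Set.Icc a b)) :
    IntervalIntegrable (fun t => 2 * ‖γ t‖ * ‖deriv γ t‖) volume a b ∧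
    ‖γ b ^ 2 - γ a ^ 2‖ ≤
      ∫ t in a..b, 2 * ‖γ t‖ * ‖deriv γ t‖ := by
  set D := derivWithin γ (Set.Icc a b) with hDdef
  have hDc : ContinuousOn D (Set.Icc a b) :=
    hγ.continuousOn_derivWithin (uniqueDiffOn_Icc hab) le_rfl
  have hγc : ContinuousOn γ (Set.Icc a b) := hγ.continuousOn
  have hmem : ∀ t ∈ Set.Ioo a b, Set.Icc a b ∈ nhds t := fun t ht => Icc_mem_nhds ht.1 ht.2
  have hderiv : ∀ t ∈ Set.Ioo a b, HasDerivAt γ (D t) t := by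
    intro t ht
    have hd : DifferentiableAt ℝ γ t :=
      ((hγ.differentiableOn one_ne_zero) t (Set.Ioo_subset_Icc_self ht)).differentiableAt (hmem t ht)
    have : D t = deriv γ t := derivWithin_of_mem_nhds (hmem t ht)
    rw [this]; exact hd.hasDerivAt
  have hDeq : ∀ t ∈ Set.Ioo a b, deriv γ t = D t := by
    intro t ht; exact (derivWithin_of_mem_nhds (hmem t ht)).symm
  -- a.e. equality on Ι a b
  have haeIoo : ∀ᵐ t ∂(volume.restrict (Set.uIoc a b)), t ∈ Set.Ioo a b := by
    have h1 : ∀ᵐ (t : ℝ), t ≠ b := by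
      have := Real.volume_singleton (a := b)
      rw [MeasureTheory.ae_iff]
      simpa using this
    have h2 : ∀ᵐ t ∂(volume.restrict (Set.uIoc a b)), t ≠ b := MeasureTheory.ae_restrict_of_ae h1
    have h3 : ∀ᵐ t ∂(volume.restrict (Set.uIoc a b)), t ∈ Set.uIoc a b :=
      MeasureTheory.ae_restrict_mem measurableSet_uIoc
    filter_upwards [h2, h3] with t ht1 ht2
    rw [Set.uIoc_of_le hab.le] at ht2
    exact ⟨ht2.1, lt_of_le_of_ne ht2.2 ht1⟩
  have hG : ContinuousOn (fun t => 2 * ‖γ t‖ * ‖D t‖) (Set.Icc a b) := by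
    exact (continuousOn_const.mul hγc.norm).mul hDc.norm
  have hGi : IntervalIntegrable (fun t => 2 * ‖γ t‖ * ‖D t‖) volume a b := by
    apply ContinuousOn.intervalIntegrable
    rwa [Set.uIcc_of_le hab.le]
  have haeq : (fun t => 2 * ‖γ t‖ * ‖deriv γ t‖)
      =ᵐ[volume.restrict (Set.uIoc a b)] (fun t => 2 * ‖γ t‖ * ‖D t‖) := by
    filter_upwards [haeIoo] with t ht
    rw [hDeq t ht]
  have hgi : IntervalIntegrable (fun t => 2 * ‖γ t‖ * ‖deriv γ t‖) volume a b :=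
    hGi.congr_ae haeq.symm
  refine ⟨hgi, ?_⟩
  have hFi : IntervalIntegrable (fun t => 2 * γ t * D t) volume a b := by
    apply ContinuousOn.intervalIntegrable
    rw [Set.uIcc_of_le hab.le]
    exact (continuousOn_const.mul hγc).mul hDc
  have hFTC : ∫ t in a..b, (2 * γ t * D t) = γ b ^ 2 - γ a ^ 2 := by
    apply intervalIntegral.integral_eq_sub_of_hasDeriv_right_of_le hab.le (hγc.pow 2)
    · intro t ht
      have h1 := hderiv t ht
      have : HasDerivAt (fun t => γ t ^ 2) (2 * γ t * D t) t := by
        have := h1.mul h1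
        rw [show (γ * γ) = fun t => γ t ^ 2 from funext fun u => (pow_two (γ u)).symm] at this
        exact this.congr_deriv (by ring)
      exact this.hasDerivWithinAt
    · exact hFi
  calc ‖γ b ^ 2 - γ a ^ 2‖ = ‖∫ t in a..b, (2 * γ t * D t)‖ := by
        rw [hFTC]
    _ ≤ ∫ t in a..b, ‖2 * γ t * D t‖ := intervalIntegral.norm_integral_le_integral_norm hab.le
    _ = ∫ t in a..b, 2 * ‖γ t‖ * ‖D t‖ := by
        apply intervalIntegral.integral_congr
        intro t _
        simp [norm_mul]
    _ = ∫ t in a..b, 2 * ‖γ t‖ * ‖deriv γ t‖ := by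
        apply intervalIntegral.integral_congr_ae
        have h1 : ∀ᵐ (t : ℝ), t ≠ b := by
          rw [MeasureTheory.ae_iff]; simpa using Real.volume_singleton (a := b)
        filter_upwards [h1] with t ht1 ht2
        rw [Set.uIoc_of_le hab.le] at ht2
        rw [hDeq t ⟨ht2.1, lt_of_le_of_ne ht2.2 ht1⟩]


lemma lower_bound {γ : ℝ → ℂ} (h : PiecewiseC1 γ) :
    ‖γ 1 ^ 2 - γ 0 ^ 2‖ ≤ LELength γ := by
  obtain ⟨hcont, n, s, hmono, hs0, hsl, hsm⟩ := h
  set a : ℕ → ℝ := fun k => s ⟨min k n, Nat.lt_succ_of_le (min_le_right _ _)⟩ with ha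
  have ha0 : a 0 = 0 := by simp only [ha, Nat.zero_min]; exact hs0
  have han : a n = 1 := by
    simp only [ha, Nat.min_self]
    exact hsl
  have hpiece : ∀ k, k < n → a k < a (k + 1) ∧
      IntervalIntegrable (fun t => 2 * ‖γ t‖ * ‖deriv γ t‖) volume (a k) (a (k+1)) ∧
      ‖γ (a (k+1)) ^ 2 - γ (a k) ^ 2‖ ≤
        ∫ t in (a k)..(a (k+1)), 2 * ‖γ t‖ * ‖deriv γ t‖ := by
    intro k hk
    have h1 : a k = s (Fin.castSucc ⟨k, hk⟩) := by
      simp only [ha, Fin.castSucc_mk]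
      congr 1
      exact Fin.ext (by simp [Nat.min_eq_left hk.le])
    have h2 : a (k+1) = s (Fin.succ ⟨k, hk⟩) := by
      simp only [ha, Fin.succ_mk]
      congr 1
      exact Fin.ext (by simp [Nat.min_eq_left hk])
    have hlt : a k < a (k+1) := by
      rw [h1, h2]; exact hmono Fin.castSucc_lt_succ
    have hcd : ContDiffOn ℝ 1 γ (Set.Icc (a k) (a (k+1))) := by
      rw [h1, h2]; exact hsm ⟨k, hk⟩
    exact ⟨hlt, (piece_bound hlt hcd).1, (piece_bound hlt hcd).2⟩
  have hsum : ∑ k ∈ Finset.range n, ∫ t in (a k)..(a (k+1)),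
      2 * ‖γ t‖ * ‖deriv γ t‖ = LELength γ := by
    rw [LELength, ← ha0, ← han]
    exact intervalIntegral.sum_integral_adjacent_intervals (fun k hk => (hpiece k hk).2.1)
  calc ‖γ 1 ^ 2 - γ 0 ^ 2‖
      = ‖∑ k ∈ Finset.range n, (γ (a (k+1)) ^ 2 - γ (a k) ^ 2)‖ := by
        rw [Finset.sum_range_sub (fun k => γ (a k) ^ 2), ha0, han]
    _ ≤ ∑ k ∈ Finset.range n, ‖γ (a (k+1)) ^ 2 - γ (a k) ^ 2‖ := by
        exact norm_sum_le _ _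
    _ ≤ ∑ k ∈ Finset.range n, ∫ t in (a k)..(a (k+1)),
          2 * ‖γ t‖ * ‖deriv γ t‖ :=
        Finset.sum_le_sum (fun k hk => (hpiece k (Finset.mem_range.mp hk)).2.2)
    _ = LELength γ := hsum


/-- half-power exponential: properties of w = exp(log ζ / 2) when Re ζ > 0. -/
lemma half_exp_props {ζ : ℂ} (hζ : 0 < ζ.re) :
    Complex.exp (Complex.log ζ * (1/2)) * Complex.exp (Complex.log ζ * (1/2)) = ζ ∧
    0 < (Complex.exp (Complex.log ζ * (1/2))).re ∧
    (Complex.exp (Complex.log ζ * (1/2))).im ^ 2 < (Complex.exp (Complex.log ζ * (1/2))).re ^ 2 := by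
  have hne : ζ ≠ 0 := by
    intro h; rw [h] at hζ; simp at hζ
  have hsq : Complex.exp (Complex.log ζ * (1/2)) * Complex.exp (Complex.log ζ * (1/2)) = ζ := by
    rw [← Complex.exp_add]
    have : Complex.log ζ * (1/2) + Complex.log ζ * (1/2) = Complex.log ζ := by ring
    rw [this, Complex.exp_log hne]
  have harg : |Complex.arg ζ| < Real.pi / 2 :=
    Complex.abs_arg_lt_pi_div_two_iff.mpr (Or.inl hζ)
  have him : (Complex.log ζ * (1/2)).im = Complex.arg ζ / 2 := by
    simp [Complex.mul_im, Complex.log_im]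
    ring
  have hre : 0 < (Complex.exp (Complex.log ζ * (1/2))).re := by
    rw [Complex.exp_re, him]
    apply mul_pos (Real.exp_pos _)
    apply Real.cos_pos_of_mem_Ioo
    constructor
    · rw [abs_lt] at harg; linarith [harg.1, Real.pi_pos]
    · rw [abs_lt] at harg; linarith [harg.2, Real.pi_pos]
  refine ⟨hsq, hre, ?_⟩
  have : (Complex.exp (Complex.log ζ * (1/2)) * Complex.exp (Complex.log ζ * (1/2))).re = ζ.re := by
    rw [hsq]
  rw [Complex.mul_re] at this
  nlinarith [hζ]

lemma re_mul_conj_pos {w₁ w₂ : ℂ} (h1 : 0 < w₁.re) (h2 : 0 < w₂.re)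
    (h1' : w₁.im ^ 2 < w₁.re ^ 2) (h2' : w₂.im ^ 2 < w₂.re ^ 2) :
    0 < (w₁ * (starRingEnd ℂ) w₂).re := by
  rw [Complex.mul_re, Complex.conj_re, Complex.conj_im]
  have key : (w₁.im * w₂.im) ^ 2 < (w₁.re * w₂.re) ^ 2 := by
    have h3 : w₁.im ^ 2 * w₂.im ^ 2 ≤ w₁.re ^ 2 * w₂.im ^ 2 :=
      mul_le_mul_of_nonneg_right h1'.le (sq_nonneg _)
    have h4 : w₁.re ^ 2 * w₂.im ^ 2 < w₁.re ^ 2 * w₂.re ^ 2 :=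
      mul_lt_mul_of_pos_left h2' (by positivity)
    calc (w₁.im * w₂.im) ^ 2 = w₁.im ^ 2 * w₂.im ^ 2 := by ring
      _ < w₁.re ^ 2 * w₂.re ^ 2 := lt_of_le_of_lt h3 h4
      _ = (w₁.re * w₂.re) ^ 2 := by ring
  nlinarith [mul_pos h1 h2]


lemma strictMono01 : StrictMono (![(0:ℝ), 1]) := by
  intro i j hij
  fin_cases i <;> fin_cases j <;> simp_all [Fin.lt_def] <;> norm_num


lemma strictMono012 : StrictMono (![(0:ℝ), 1/2, 1]) := by
  intro i j hij
  fin_cases i <;> fin_cases j <;> simp_all [Fin.lt_def] <;> norm_num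


lemma abs_sq_sub_sq_of_re_eq_zero (A B : ℂ) (h : (A * (starRingEnd ℂ) B).re = 0) :
    ‖A^2 - B^2‖ = ‖A‖^2 + ‖B‖^2 := by
  have h' : A.re * B.re + A.im * B.im = 0 := by
    rw [Complex.mul_re, Complex.conj_re, Complex.conj_im] at h
    linarith
  have hnn : (0:ℝ) ≤ ‖A‖^2 + ‖B‖^2 := by positivity
  rw [Complex.norm_def, show Complex.normSq (A^2 - B^2)
    = (‖A‖^2 + ‖B‖^2)^2 from ?_, Real.sqrt_sq hnn]
  rw [show (‖A‖)^2 = Complex.normSq A from Complex.sq_norm A,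
    show (‖B‖)^2 = Complex.normSq B from Complex.sq_norm B]
  simp only [Complex.normSq_apply, pow_two, Complex.sub_re, Complex.sub_im,
    Complex.mul_re, Complex.mul_im]
  linear_combination (-4*(A.re*B.re + A.im*B.im)) * h'


lemma exists_path_pos (A B : ℂ) (h : 0 < (A * (starRingEnd ℂ) B).re) :
    ∃ γ : ℝ → ℂ, PiecewiseC1 γ ∧ γ 0 = A ∧ γ 1 = B ∧
      LELength γ = ‖A ^ 2 - B ^ 2‖ := by
  have hA : A ≠ 0 := by rintro rfl; simp at h
  have hB : B ≠ 0 := by rintro rfl; simp at h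
  set ω : ℂ := A * (starRingEnd ℂ) B with hω
  set e : ℂ := (‖B^2‖ : ℂ) * (starRingEnd ℂ) (A^2)
      + (‖A^2‖ : ℂ) * (starRingEnd ℂ) (B^2) with he
  -- basic abs facts
  have hxpos : (0:ℝ) < ‖A^2‖ := by
    rw [norm_pow]; exact pow_pos (norm_pos_iff.mpr hA) 2
  have hypos : (0:ℝ) < ‖B^2‖ := by
    rw [norm_pow]; exact pow_pos (norm_pos_iff.mpr hB) 2
  have hxy : ‖A^2‖ * ‖B^2‖ = ω.re^2 + ω.im^2 := by
    have h1 : ‖A^2‖ * ‖B^2‖ = Complex.normSq ω := by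
      rw [← Complex.sq_norm]
      simp only [hω, norm_mul, norm_pow, Complex.norm_conj]
      ring
    rw [h1, Complex.normSq_apply]; ring
  have hωsq : A^2 * (starRingEnd ℂ) (B^2) = ω^2 := by
    rw [hω, map_pow]; ring
  have heA : (e * A^2).re = ‖A^2‖ * (2 * ω.re^2) := by
    have h1 : e * A^2 = ((‖B^2‖ * Complex.normSq (A^2) : ℝ) : ℂ)
        + (‖A^2‖ : ℂ) * ω^2 := by
      rw [he, ← hωsq]
      push_cast
      rw [← Complex.mul_conj (A^2)]
      ring
    rw [h1, Complex.add_re, Complex.ofReal_re, Complex.re_ofReal_mul]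
    have h2 : (ω^2).re = ω.re^2 - ω.im^2 := by
      rw [pow_two, Complex.mul_re]; ring
    rw [h2, ← Complex.sq_norm]
    nlinarith [hxy, hxpos, hypos]
  have heB : (e * B^2).re = ‖B^2‖ * (2 * ω.re^2) := by
    have hconj : (starRingEnd ℂ) (A^2) * B^2 = (starRingEnd ℂ) (ω^2) := by
      rw [hω]; simp only [map_pow, map_mul, Complex.conj_conj]; ring
    have h1 : e * B^2 = (‖B^2‖ : ℂ) * (starRingEnd ℂ) (ω^2)
        + ((‖A^2‖ * Complex.normSq (B^2) : ℝ) : ℂ) := by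
      rw [he, ← hconj]
      push_cast
      rw [← Complex.mul_conj (B^2)]
      ring
    rw [h1, Complex.add_re, Complex.ofReal_re, Complex.re_ofReal_mul, Complex.conj_re]
    have h2 : (ω^2).re = ω.re^2 - ω.im^2 := by
      rw [pow_two, Complex.mul_re]; ring
    rw [h2, ← Complex.sq_norm]
    nlinarith [hxy, hxpos, hypos]
  have heApos : 0 < (e * A^2).re := by rw [heA]; positivity
  have heBpos : 0 < (e * B^2).re := by rw [heB]; positivity
  have hene : e ≠ 0 := by
    intro h0; rw [h0, zero_mul] at heApos; simp at heApos
  -- the segment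
  set zf : ℝ → ℂ := fun t => A^2 + (t:ℂ) * (B^2 - A^2) with hzf
  have hzf0 : zf 0 = A^2 := by simp [hzf]
  have hzf1 : zf 1 = B^2 := by simp [hzf]
  have hpos : ∀ t ∈ Set.Icc (0:ℝ) 1, 0 < (e * zf t).re := by
    intro t ht
    have h1 : e * zf t = ((1 - t : ℝ) : ℂ) * (e * A^2) + ((t:ℝ):ℂ) * (e * B^2) := by
      simp only [hzf]; push_cast; ring
    rw [h1, Complex.add_re, Complex.re_ofReal_mul, Complex.re_ofReal_mul]
    rcases lt_or_eq_of_le ht.1 with h0 | h0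
    · have h2 : 0 < t * (e * B^2).re := mul_pos h0 heBpos
      have h3 : 0 ≤ (1 - t) * (e * A^2).re := mul_nonneg (by linarith [ht.2]) heApos.le
      linarith
    · rw [← h0]; simp only [sub_zero, one_mul, zero_mul, add_zero]; exact heApos
  -- sqrt along the segment
  set w : ℝ → ℂ := fun t => Complex.exp (Complex.log (e * zf t) * (1/2)) with hw
  set c : ℂ := Complex.exp (Complex.log e * (1/2)) with hc
  have hc0 : c ≠ 0 := Complex.exp_ne_zero _
  have hcc : c * c = e := by
    rw [hc, ← Complex.exp_add]
    rw [show Complex.log e * (1/2) + Complex.log e * (1/2) = Complex.log e by ring]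
    exact Complex.exp_log hene
  have hwsq : ∀ t : ℝ, 0 < (e * zf t).re → w t * w t = e * zf t := by
    intro t ht; exact (half_exp_props ht).1
  -- choose sign
  have hx0 : (c⁻¹ * w 0)^2 = A^2 := by
    rw [pow_two, show c⁻¹ * w 0 * (c⁻¹ * w 0) = (w 0 * w 0) * (c * c)⁻¹ by ring,
      hwsq 0 (by rw [hzf0]; exact heApos), hcc, hzf0, mul_comm e (A^2), mul_assoc,
      mul_inv_cancel₀ hene, mul_one]
  obtain ⟨ε, hε2, hγ0⟩ : ∃ ε : ℂ, (ε = 1 ∨ ε = -1) ∧ ε * (c⁻¹ * w 0) = A := by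
    have hfac : (c⁻¹ * w 0 - A) * (c⁻¹ * w 0 + A) = 0 := by linear_combination hx0
    rcases mul_eq_zero.mp hfac with h1 | h1
    · exact ⟨1, Or.inl rfl, by rw [one_mul, sub_eq_zero.mp h1]⟩
    · exact ⟨-1, Or.inr rfl, by rw [eq_neg_of_add_eq_zero_left h1]; ring⟩
  have hee : ε * ε = 1 := by rcases hε2 with h1|h1 <;> rw [h1] <;> ring
  set γ : ℝ → ℂ := fun t => ε * (c⁻¹ * w t) with hγ
  have hγsq : ∀ t : ℝ, 0 < (e * zf t).re → γ t ^ 2 = zf t := by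
    intro t ht
    rw [hγ]
    simp only
    rw [pow_two, show ε * (c⁻¹ * w t) * (ε * (c⁻¹ * w t))
        = (ε * ε) * ((w t * w t) * (c * c)⁻¹) by ring, hee, hwsq t ht, hcc, one_mul,
      mul_comm e (zf t), mul_assoc, mul_inv_cancel₀ hene, mul_one]
  -- smoothness
  have hzfc : ContDiff ℝ 1 zf := by
    apply contDiff_const.add
    exact (Complex.ofRealCLM.contDiff).mul contDiff_const
  have hsmooth : ∀ t₀ : ℝ, 0 < (e * zf t₀).re → ContDiffAt ℝ 1 γ t₀ := by
    intro t₀ hre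
    have h1 : ContDiffAt ℝ 1 (fun t : ℝ => e * zf t) t₀ := (contDiff_const.mul hzfc).contDiffAt
    have h2 : ContDiffAt ℝ 1 Complex.log (e * zf t₀) :=
      ContDiffAt.restrict_scalars ℝ
        (Complex.contDiffAt_log (Complex.mem_slitPlane_iff.mpr (Or.inl hre)))
    have h3 : ContDiffAt ℝ 1 (fun t : ℝ => Complex.log (e * zf t)) t₀ := by
      have := h2.comp t₀ h1; exact this
    have h4 : ContDiffAt ℝ 1 (fun t : ℝ => Complex.log (e * zf t) * (1/2)) t₀ :=
      h3.mul contDiffAt_const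
    have h5 : ContDiffAt ℝ 1 Complex.exp (Complex.log (e * zf t₀) * (1/2)) :=
      (Complex.contDiff_exp (𝕜 := ℝ) (n := 1)).contDiffAt
    have h6 : ContDiffAt ℝ 1 w t₀ := h5.comp t₀ h4
    exact contDiffAt_const.mul (contDiffAt_const.mul h6)
  have hzfderiv : ∀ t₀ : ℝ, HasDerivAt zf (B^2 - A^2) t₀ := by
    intro t₀
    have h1 : HasDerivAt (fun t : ℝ => (t:ℂ)) 1 t₀ := by
      simpa using (hasDerivAt_id t₀).ofReal_comp
    simpa [hzf] using (h1.mul_const (B^2 - A^2)).const_add (A^2)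
  have hrecont : Continuous fun t : ℝ => (e * zf t).re :=
    Complex.continuous_re.comp (continuous_const.mul hzfc.continuous)
  have hprod : ∀ t₀ ∈ Set.Icc (0:ℝ) 1, 2 * γ t₀ * deriv γ t₀ = B^2 - A^2 := by
    intro t₀ ht
    have hre := hpos t₀ ht
    have hev : ∀ᶠ t in nhds t₀, 0 < (e * zf t).re :=
      (isOpen_lt continuous_const hrecont).mem_nhds hre
    have hsqev : (fun t => γ t ^ 2) =ᶠ[nhds t₀] zf := by
      filter_upwards [hev] with t ht'
      exact hγsq t ht'
    have hd1 : HasDerivAt (fun t => γ t ^ 2) (B^2 - A^2) t₀ :=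
      (hzfderiv t₀).congr_of_eventuallyEq hsqev
    have hd2 : DifferentiableAt ℝ γ t₀ := (hsmooth t₀ hre).differentiableAt one_ne_zero
    have hd3 : HasDerivAt (fun t => γ t ^ 2)
        (deriv γ t₀ * γ t₀ + γ t₀ * deriv γ t₀) t₀ := by
      have h4 := hd2.hasDerivAt.mul hd2.hasDerivAt
      have h5 : (γ * γ) = fun t => γ t ^ 2 := funext fun u => (pow_two (γ u)).symm
      rwa [h5] at h4
    have := hd1.unique hd3
    rw [this]; ring
  have habs : ∀ t ∈ Set.Icc (0:ℝ) 1,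
      2 * ‖γ t‖ * ‖deriv γ t‖ = ‖A^2 - B^2‖ := by
    intro t ht
    have h1 : ‖2 * γ t * deriv γ t‖ = ‖B^2 - A^2‖ := by
      rw [hprod t ht]
    rw [norm_mul, norm_mul, Complex.norm_two] at h1
    rw [h1, norm_sub_rev]
  -- endpoint γ 1 = B
  have hγ1sq : γ 1 ^ 2 = B ^ 2 := by
    rw [hγsq 1 (hpos 1 (by norm_num)), hzf1]
  have hγ1 : γ 1 = B := by
    have hfac : (γ 1 - B) * (γ 1 + B) = 0 := by linear_combination hγ1sq
    rcases mul_eq_zero.mp hfac with h1 | h1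
    · exact sub_eq_zero.mp h1
    · exfalso
      have hγ1eq : γ 1 = -B := eq_neg_of_add_eq_zero_left h1
      -- w 0 = ε * c * A and w 1 = -(ε * c * B)
      have hid : ∀ x : ℂ, x = ε * c * (ε * (c⁻¹ * x)) := by
        intro x
        rw [show ε * c * (ε * (c⁻¹ * x)) = (ε * ε) * (c * c⁻¹) * x by ring,
          hee, mul_inv_cancel₀ hc0, one_mul, one_mul]
      have hw0 : w 0 = ε * c * A := by
        conv_lhs => rw [hid (w 0)]
        rw [hγ0]
      have hw1 : w 1 = ε * c * (-B) := by
        have h2 : ε * (c⁻¹ * w 1) = -B := hγ1eq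
        conv_lhs => rw [hid (w 1)]
        rw [h2]
      have hεconj : (starRingEnd ℂ) ε = ε := by
        rcases hε2 with h3 | h3 <;> rw [h3] <;> simp
      have hkey : w 0 * (starRingEnd ℂ) (w 1) = -((Complex.normSq c : ℝ) : ℂ) * ω := by
        rw [hw0, hw1, hω]
        simp only [map_neg, map_mul, hεconj]
        have hmc : c * (starRingEnd ℂ) c = ((Complex.normSq c : ℝ) : ℂ) := Complex.mul_conj c
        linear_combination (-(A * (starRingEnd ℂ) B) * (c * (starRingEnd ℂ) c)) * hee
          + (-(A * (starRingEnd ℂ) B)) * hmc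
      have hneg : (w 0 * (starRingEnd ℂ) (w 1)).re < 0 := by
        rw [hkey]
        have : -((Complex.normSq c : ℝ) : ℂ) * ω = ((-(Complex.normSq c) : ℝ) : ℂ) * ω := by
          push_cast; ring
        rw [this, Complex.re_ofReal_mul]
        have hnsq : 0 < Complex.normSq c := Complex.normSq_pos.mpr hc0
        have : 0 < ω.re := h
        nlinarith
      have hp0 := half_exp_props (hpos 0 (by norm_num))
      have hp1 := half_exp_props (hpos 1 (by norm_num))
      have hposre : 0 < (w 0 * (starRingEnd ℂ) (w 1)).re :=
        re_mul_conj_pos hp0.2.1 hp1.2.1 hp0.2.2 hp1.2.2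
      linarith
  -- LELength
  have hlen : LELength γ = ‖A^2 - B^2‖ := by
    rw [LELength]
    rw [intervalIntegral.integral_congr (g := fun _ => ‖A^2 - B^2‖)
      (by rw [Set.uIcc_of_le (zero_le_one)]; exact habs)]
    simp
  -- piecewise C1
  have hpc : PiecewiseC1 γ := by
    constructor
    · intro t ht
      exact ((hsmooth t (hpos t ht)).continuousAt).continuousWithinAt
    · refine ⟨1, ![0, 1], strictMono01, rfl, rfl, ?_⟩
      intro i
      rw [Fin.eq_zero i]
      show ContDiffOn ℝ 1 γ (Set.Icc (![(0:ℝ), 1] 0) (![(0:ℝ), 1] 1))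
      intro t ht
      have ht' : t ∈ Set.Icc (0:ℝ) 1 := by simpa using ht
      exact ((hsmooth t (hpos t ht')).contDiffWithinAt)
  exact ⟨γ, hpc, hγ0, hγ1, hlen⟩


lemma exists_path_zero (A B : ℂ) (h : (A * (starRingEnd ℂ) B).re = 0) :
    ∃ γ : ℝ → ℂ, PiecewiseC1 γ ∧ γ 0 = A ∧ γ 1 = B ∧
      LELength γ = ‖A ^ 2 - B ^ 2‖ := by
  set f1 : ℝ → ℂ := fun t => (1 - 2*(t:ℂ)) * A with hf1
  set f2 : ℝ → ℂ := fun t => (2*(t:ℂ) - 1) * B with hf2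
  set γ : ℝ → ℂ := fun t => if t ≤ 1/2 then f1 t else f2 t with hγ
  have hγ0 : γ 0 = A := by simp [hγ, hf1]
  have hγ1 : γ 1 = B := by norm_num [hγ, hf2]
  have heq1 : ∀ t : ℝ, t ≤ 1/2 → γ t = f1 t := fun t ht => if_pos ht
  have heq2 : ∀ t : ℝ, 1/2 ≤ t → γ t = f2 t := by
    intro t ht
    rcases eq_or_lt_of_le ht with h1 | h1
    · rw [hγ]; simp only [← h1]
      norm_num [hf1, hf2]
    · exact if_neg (not_le.mpr h1)
  have hone : HasDerivAt (fun t : ℝ => (t:ℂ)) 1 0 := by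
      simpa using (hasDerivAt_id (0:ℝ)).ofReal_comp
  have hd1 : ∀ t : ℝ, HasDerivAt f1 (-2 * A) t := by
    intro t
    have h1 : HasDerivAt (fun t : ℝ => (t:ℂ)) 1 t := by
      simpa using (hasDerivAt_id t).ofReal_comp
    simpa using ((h1.const_mul (2:ℂ)).const_sub 1).mul_const A
  have hd2 : ∀ t : ℝ, HasDerivAt f2 (2 * B) t := by
    intro t
    have h1 : HasDerivAt (fun t : ℝ => (t:ℂ)) 1 t := by
      simpa using (hasDerivAt_id t).ofReal_comp
    simpa using ((h1.const_mul (2:ℂ)).sub_const 1).mul_const B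
  have hγd1 : ∀ t : ℝ, t < 1/2 → HasDerivAt γ (-2 * A) t := by
    intro t ht
    apply (hd1 t).congr_of_eventuallyEq
    filter_upwards [Iio_mem_nhds ht] with u hu
    exact heq1 u (le_of_lt hu)
  have hγd2 : ∀ t : ℝ, 1/2 < t → HasDerivAt γ (2 * B) t := by
    intro t ht
    apply (hd2 t).congr_of_eventuallyEq
    filter_upwards [Ioi_mem_nhds ht] with u hu
    exact heq2 u (le_of_lt hu)
  -- integrand on each piece
  set g : ℝ → ℝ := fun t => 2 * ‖γ t‖ * ‖deriv γ t‖ with hg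
  set k1 : ℝ := ‖A‖ ^ 2 with hk1
  set k2 : ℝ := ‖B‖ ^ 2 with hk2
  have hg1 : ∀ t ∈ Set.Ioo (0:ℝ) (1/2), g t = 4 * (1 - 2*t) * k1 := by
    intro t ht
    have hd := hγd1 t ht.2
    rw [hg]
    simp only
    rw [hd.deriv, heq1 t ht.2.le, hf1]
    simp only
    rw [show (1 - 2*(t:ℂ)) = ((1 - 2*t : ℝ) : ℂ) by push_cast; ring]
    rw [norm_mul, norm_mul, Complex.norm_real, Real.norm_eq_abs, norm_neg, Complex.norm_two,
      _root_.abs_of_nonneg (by linarith [ht.2] : (0:ℝ) ≤ 1 - 2*t), hk1]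
    ring
  have hg2 : ∀ t ∈ Set.Ioo (1/2:ℝ) 1, g t = 4 * (2*t - 1) * k2 := by
    intro t ht
    have hd := hγd2 t ht.1
    rw [hg]
    simp only
    rw [hd.deriv, heq2 t ht.1.le, hf2]
    simp only
    rw [show (2*(t:ℂ) - 1) = ((2*t - 1 : ℝ) : ℂ) by push_cast; ring]
    rw [norm_mul, norm_mul, Complex.norm_real, Real.norm_eq_abs, Complex.norm_two,
      _root_.abs_of_nonneg (by linarith [ht.1] : (0:ℝ) ≤ 2*t - 1), hk2]
    ring
  have hae1 : ∀ᵐ t ∂(volume : Measure ℝ), t ∈ Set.uIoc (0:ℝ) (1/2) → g t = 4 * (1 - 2*t) * k1 := by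
    have h1 : ∀ᵐ (t : ℝ), t ≠ 1/2 := by
      rw [MeasureTheory.ae_iff]; simpa using Real.volume_singleton (a := (1/2:ℝ))
    filter_upwards [h1] with t ht1 ht2
    rw [Set.uIoc_of_le (by norm_num : (0:ℝ) ≤ 1/2)] at ht2
    exact hg1 t ⟨ht2.1, lt_of_le_of_ne ht2.2 ht1⟩
  have hae2 : ∀ᵐ t ∂(volume : Measure ℝ), t ∈ Set.uIoc (1/2:ℝ) 1 → g t = 4 * (2*t - 1) * k2 := by
    have h1 : ∀ᵐ (t : ℝ), t ≠ 1 := by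
      rw [MeasureTheory.ae_iff]; simpa using Real.volume_singleton (a := (1:ℝ))
    filter_upwards [h1] with t ht1 ht2
    rw [Set.uIoc_of_le (by norm_num : (1/2:ℝ) ≤ 1)] at ht2
    exact hg2 t ⟨ht2.1, lt_of_le_of_ne ht2.2 ht1⟩
  have hcont1 : Continuous fun t : ℝ => 4 * (1 - 2*t) * k1 := by fun_prop
  have hcont2 : Continuous fun t : ℝ => 4 * (2*t - 1) * k2 := by fun_prop
  have hr1 : g =ᵐ[volume.restrict (Set.uIoc (0:ℝ) (1/2))] (fun t => 4*(1 - 2*t)*k1) := by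
    filter_upwards [MeasureTheory.ae_restrict_of_ae hae1,
      MeasureTheory.ae_restrict_mem measurableSet_uIoc] with t h1 h2
    exact h1 h2
  have hr2 : g =ᵐ[volume.restrict (Set.uIoc (1/2:ℝ) 1)] (fun t => 4*(2*t - 1)*k2) := by
    filter_upwards [MeasureTheory.ae_restrict_of_ae hae2,
      MeasureTheory.ae_restrict_mem measurableSet_uIoc] with t h1 h2
    exact h1 h2
  have hint1 : IntervalIntegrable g volume 0 (1/2) :=
    (hcont1.intervalIntegrable 0 (1/2)).congr_ae hr1.symm
  have hint2 : IntervalIntegrable g volume (1/2) 1 :=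
    (hcont2.intervalIntegrable (1/2) 1).congr_ae hr2.symm
  have hI1 : ∫ t in (0:ℝ)..(1/2), g t = k1 := by
    rw [intervalIntegral.integral_congr_ae hae1]
    have hF : ∀ u ∈ Set.uIcc (0:ℝ) (1/2),
        HasDerivAt (fun u : ℝ => (4*u - 4*u^2)*k1) (4*(1 - 2*u)*k1) u := by
      intro u _
      have h1 := (((hasDerivAt_id u).const_mul (4:ℝ)).sub
        ((hasDerivAt_pow 2 u).const_mul (4:ℝ))).mul_const k1
      exact h1.congr_deriv (by simp only [Nat.cast_ofNat, Nat.reduceSub, pow_one]; ring)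
    rw [intervalIntegral.integral_eq_sub_of_hasDerivAt hF (hcont1.intervalIntegrable _ _)]
    norm_num
  have hI2 : ∫ t in (1/2:ℝ)..1, g t = k2 := by
    rw [intervalIntegral.integral_congr_ae hae2]
    have hF : ∀ u ∈ Set.uIcc (1/2:ℝ) 1,
        HasDerivAt (fun u : ℝ => (4*u^2 - 4*u)*k2) (4*(2*u - 1)*k2) u := by
      intro u _
      have h1 := (((hasDerivAt_pow 2 u).const_mul (4:ℝ)).sub
        ((hasDerivAt_id u).const_mul (4:ℝ))).mul_const k2
      exact h1.congr_deriv (by simp only [Nat.cast_ofNat, Nat.reduceSub, pow_one]; ring)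
    rw [intervalIntegral.integral_eq_sub_of_hasDerivAt hF (hcont2.intervalIntegrable _ _)]
    norm_num
  have hlen : LELength γ = ‖A^2 - B^2‖ := by
    rw [LELength, show (∫ t in (0:ℝ)..1, 2 * ‖γ t‖ * ‖deriv γ t‖)
      = ∫ t in (0:ℝ)..1, g t from rfl,
      ← intervalIntegral.integral_add_adjacent_intervals hint1 hint2, hI1, hI2,
      abs_sq_sub_sq_of_re_eq_zero A B h]
  have hf1c : ContDiff ℝ 1 f1 := by
    rw [hf1]
    apply ContDiff.mul _ contDiff_const
    exact contDiff_const.sub (contDiff_const.mul (Complex.ofRealCLM.contDiff))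
  have hf2c : ContDiff ℝ 1 f2 := by
    rw [hf2]
    apply ContDiff.mul _ contDiff_const
    exact (contDiff_const.mul (Complex.ofRealCLM.contDiff)).sub contDiff_const
  have hγc : Continuous γ := by
    rw [hγ]
    apply Continuous.if_le hf1c.continuous hf2c.continuous continuous_id continuous_const
    intro x hx
    have hx' : x = 1/2 := hx
    rw [hx', hf1, hf2]
    norm_num
  have hpc : PiecewiseC1 γ := by
    refine ⟨hγc.continuousOn, 2, ![0, 1/2, 1], strictMono012, rfl, rfl, ?_⟩
    intro i
    fin_cases i
    · show ContDiffOn ℝ 1 γ (Set.Icc (0:ℝ) (1/2))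
      exact (hf1c.contDiffOn).congr (fun t ht => heq1 t ht.2)
    · show ContDiffOn ℝ 1 γ (Set.Icc (1/2:ℝ) 1)
      exact (hf2c.contDiffOn).congr (fun t ht => heq2 t ht.1)
  exact ⟨γ, hpc, hγ0, hγ1, hlen⟩


lemma LELength_nonneg (γ : ℝ → ℂ) : 0 ≤ LELength γ :=
  intervalIntegral.integral_nonneg zero_le_one (fun u _ => by positivity)

end DLEProof


/-- If `Re(A·conj B) ≥ 0` then `dLE(A,B) = |A² − B²|`. -/
theorem dLE_eq_of_re_nonneg (A B : ℂ) (h : 0 ≤ (A * (starRingEnd ℂ) B).re) :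
    dLE A B = ‖A ^ 2 - B ^ 2‖ := by
  obtain ⟨γ₀, hpc, h0, h1, hlen⟩ : ∃ γ : ℝ → ℂ, PiecewiseC1 γ ∧ γ 0 = A ∧ γ 1 = B ∧
      LELength γ = ‖A ^ 2 - B ^ 2‖ := by
    rcases lt_or_eq_of_le h with hpos | hzero
    · exact DLEProof.exists_path_pos A B hpos
    · exact DLEProof.exists_path_zero A B hzero.symm
  have hmem : ‖A ^ 2 - B ^ 2‖ ∈
      {L : ℝ | ∃ γ : ℝ → ℂ, PiecewiseC1 γ ∧ γ 0 = A ∧ γ 1 = B ∧ LELength γ = L} :=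
    ⟨γ₀, hpc, h0, h1, hlen⟩
  have hbdd : BddBelow {L : ℝ | ∃ γ : ℝ → ℂ, PiecewiseC1 γ ∧ γ 0 = A ∧ γ 1 = B ∧ LELength γ = L} := by
    refine ⟨0, ?_⟩
    rintro L ⟨γ, _, _, _, rfl⟩
    exact DLEProof.LELength_nonneg γ
  rw [dLE]
  apply le_antisymm
  · exact csInf_le hbdd hmem
  · apply le_csInf ⟨_, hmem⟩
    rintro L ⟨γ, hγpc, hγ0, hγ1, rfl⟩
    have hlow := DLEProof.lower_bound hγpc
    rw [hγ0, hγ1, norm_sub_rev] at hlow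
    exact hlow
end

section
/- For all A, B ∈ ℂ with Re(A · conj(B)) ≤ 0, the log-euclidean distance is given by dLE(A, B) = |A|² + |B|²; in particular dLE(A, 0) = |A|² for every A ∈ ℂ. -/
open Complex Set

open MeasureTheory intervalIntegral

noncomputable def uCal (a b w : ℂ) : ℝ := (max ((a*w).re) 0)^2 - (max ((b*w).re) 0)^2

lemma real_key (c s x p : ℝ) (h1 : c^2 + s^2 = 1) :
    (max x 0 - max (c*x - s*p) 0 * c)^2 + (max (c*x - s*p) 0 * s)^2 ≤ x^2 + p^2 := by
  have hid : (c*x - s*p)^2 + (s*x + c*p)^2 = x^2 + p^2 := by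
    linear_combination (x^2 + p^2) * h1
  rcases le_or_gt x 0 with hx | hx
  · rw [max_eq_right hx]
    rcases le_or_gt (c*x - s*p) 0 with hy | hy
    · rw [max_eq_right hy]; simp; positivity
    · rw [max_eq_left hy.le]
      have hgl : (0 - (c*x - s*p)*c)^2 + ((c*x - s*p)*s)^2 = (c*x - s*p)^2 := by
        linear_combination (c*x - s*p)^2 * h1
      nlinarith [hgl, hid, sq_nonneg (s*x + c*p)]
  · rw [max_eq_left hx.le]
    rcases le_or_gt (c*x - s*p) 0 with hy | hy
    · rw [max_eq_right hy]; nlinarith [sq_nonneg p]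
    · rw [max_eq_left hy.le]
      have hid2 : (x - (c*x - s*p)*c)^2 + ((c*x - s*p)*s)^2 + (c*p)^2 + (c*x)^2
          = x^2 + p^2 := by
        linear_combination ((c*x - s*p)^2 + p^2) * h1
      nlinarith [hid2, sq_nonneg (c*p), sq_nonneg (c*x)]

lemma sqkey (a b w : ℂ) (ha : ‖a‖ = 1) (hb : ‖b‖ = 1) :
    ‖((max (a*w).re 0 : ℝ) : ℂ) * a - ((max (b*w).re 0 : ℝ) : ℂ) * b‖ ≤ ‖w‖ := by
  set r := b * (starRingEnd ℂ) a with hr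
  set z := a * w with hz
  have hca : (starRingEnd ℂ) a * a = 1 := by
    rw [mul_comm, Complex.mul_conj]
    norm_cast
    rw [Complex.normSq_eq_norm_sq, ha]; norm_num
  have hbw : b * w = r * z := by
    have h : r * z = b * ((starRingEnd ℂ) a * a) * w := by rw [hr, hz]; ring
    rw [h, hca]; ring
  have hzw : ‖z‖ = ‖w‖ := by rw [hz, norm_mul, ha, one_mul]
  have hrn : r.re^2 + r.im^2 = 1 := by
    have h : ‖r‖ = 1 := by rw [hr, norm_mul, RCLike.norm_conj, ha, hb, one_mul]
    have h2 : r.re^2 + r.im^2 = Complex.normSq r := by rw [Complex.normSq_apply]; ring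
    rw [h2, Complex.normSq_eq_norm_sq, h]; norm_num
  -- reduce to ‖X - Y*r‖ ≤ ‖z‖
  set X := max (a*w).re 0 with hX
  set Y := max (b*w).re 0 with hY
  have hmulconj : ((X:ℂ) * a - (Y:ℂ) * b) * (starRingEnd ℂ) a = (X:ℂ) - (Y:ℂ) * r := by
    have h : ((X:ℂ) * a - (Y:ℂ) * b) * (starRingEnd ℂ) a
        = (X:ℂ) * ((starRingEnd ℂ) a * a) - (Y:ℂ) * r := by rw [hr]; ring
    rw [h, hca, mul_one]
  have hnorm : ‖(X:ℂ) * a - (Y:ℂ) * b‖ = ‖(X:ℂ) - (Y:ℂ) * r‖ := by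
    rw [← hmulconj, norm_mul, RCLike.norm_conj, ha, mul_one]
  rw [hnorm, ← hzw]
  -- now componentwise
  have hy' : (b*w).re = r.re * z.re - r.im * z.im := by rw [hbw, Complex.mul_re]
  have hre : ((X:ℂ) - (Y:ℂ) * r).re = X - Y * r.re := by simp [Complex.sub_re, Complex.mul_re]
  have him : ((X:ℂ) - (Y:ℂ) * r).im = -(Y * r.im) := by simp [Complex.sub_im, Complex.mul_im]
  rw [Complex.norm_def, Complex.norm_def]
  apply Real.sqrt_le_sqrt
  rw [Complex.normSq_apply, Complex.normSq_apply, hre, him]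
  have hX' : X = max z.re 0 := by rw [hX, hz]
  have hY' : Y = max (r.re * z.re - r.im * z.im) 0 := by rw [hY, hy']
  rw [hX', hY']
  have := real_key r.re r.im z.re z.im hrn
  nlinarith [this]

lemma maxre_le (c w : ℂ) (hc : ‖c‖ ≤ 1) : max (c*w).re 0 ≤ ‖w‖ := by
  apply max_le _ (norm_nonneg w)
  calc (c*w).re ≤ |(c*w).re| := le_abs_self _
    _ ≤ ‖c*w‖ := Complex.abs_re_le_norm _
    _ = ‖c‖ * ‖w‖ := by rw [norm_mul]
    _ ≤ 1 * ‖w‖ := mul_le_mul_of_nonneg_right hc (norm_nonneg w)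
    _ = ‖w‖ := one_mul _

lemma sqkey' (a b w : ℂ) (ha : ‖a‖ = 1 ∨ a = 0) (hb : ‖b‖ = 1 ∨ b = 0) :
    ‖((max (a*w).re 0 : ℝ) : ℂ) * a - ((max (b*w).re 0 : ℝ) : ℂ) * b‖ ≤ ‖w‖ := by
  rcases ha with ha | ha <;> rcases hb with hb | hb
  · exact sqkey a b w ha hb
  · subst hb
    simp only [mul_zero, sub_zero]
    rw [norm_mul, ha, mul_one, Complex.norm_real, Real.norm_eq_abs,
      _root_.abs_of_nonneg (le_max_right ((a*w).re) (0:ℝ))]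
    exact maxre_le a w ha.le
  · subst ha
    simp only [mul_zero, zero_sub, norm_neg, zero_mul]
    rw [norm_mul, hb, mul_one, Complex.norm_real, Real.norm_eq_abs,
      _root_.abs_of_nonneg (le_max_right ((b*w).re) (0:ℝ))]
    exact maxre_le b w hb.le
  · subst ha; subst hb; simp

lemma hasDerivAt_maxsq (s : ℝ) : HasDerivAt (fun t => (max t 0)^2) (2 * max s 0) s := by
  rcases lt_trichotomy s 0 with h | h | h
  · have heq : (fun t : ℝ => (max t 0)^2) =ᶠ[nhds s] (fun _ => 0) := by
      filter_upwards [Iio_mem_nhds h] with t ht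
      rw [max_eq_right (le_of_lt ht)]; norm_num
    rw [max_eq_right h.le, mul_zero]
    exact (hasDerivAt_const s (0:ℝ)).congr_of_eventuallyEq heq
  · subst h
    rw [max_self, mul_zero]
    rw [hasDerivAt_iff_isLittleO]
    simp only [sub_zero, smul_zero]
    rw [Asymptotics.isLittleO_iff]
    intro ε hε
    filter_upwards [Metric.ball_mem_nhds (0:ℝ) hε] with t ht
    rw [Metric.mem_ball, Real.dist_eq, sub_zero] at ht
    rw [Real.norm_eq_abs, Real.norm_eq_abs]
    have h1 : |(max t 0)^2 - (max (0:ℝ) 0)^2| ≤ |t| * |t| := by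
      rw [max_self]
      norm_num
      rcases le_or_gt t 0 with h' | h'
      · rw [max_eq_right h']; simp [mul_self_nonneg]
      · rw [max_eq_left h'.le]; nlinarith [sq_nonneg t]
    calc |(max t 0)^2 - (max (0:ℝ) 0)^2| ≤ |t| * |t| := h1
      _ ≤ ε * |t| := mul_le_mul_of_nonneg_right ht.le (abs_nonneg t)
  · have heq : (fun t : ℝ => (max t 0)^2) =ᶠ[nhds s] (fun t => t^2) := by
      filter_upwards [Ioi_mem_nhds h] with t ht
      rw [max_eq_left (le_of_lt ht)]
    rw [max_eq_left h.le]
    have h2 : HasDerivAt (fun t : ℝ => t^2) (2*s) s := by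
      simpa using hasDerivAt_pow 2 s
    exact h2.congr_of_eventuallyEq heq

lemma gradBound (a b : ℂ) (ha : ‖a‖ = 1 ∨ a = 0) (hb : ‖b‖ = 1 ∨ b = 0) (w v : ℂ) :
    |2 * max ((a*w).re) 0 * (a*v).re - 2 * max ((b*w).re) 0 * (b*v).re|
      ≤ 2 * ‖w‖ * ‖v‖ := by
  set X := max ((a*w).re) 0
  set Y := max ((b*w).re) 0
  have h1 : 2 * X * (a*v).re - 2 * Y * (b*v).re
      = 2 * ((((X:ℝ):ℂ) * a - ((Y:ℝ):ℂ) * b) * v).re := by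
    simp [Complex.sub_re, Complex.mul_re, Complex.ofReal_re, Complex.ofReal_im,
      Complex.sub_im, Complex.mul_im]
    ring
  rw [h1, abs_mul]
  have h2 : |(((((X:ℝ):ℂ) * a - ((Y:ℝ):ℂ) * b)) * v).re| ≤ ‖w‖ * ‖v‖ := by
    calc |(((((X:ℝ):ℂ) * a - ((Y:ℝ):ℂ) * b)) * v).re|
        ≤ ‖(((X:ℝ):ℂ) * a - ((Y:ℝ):ℂ) * b) * v‖ := Complex.abs_re_le_norm _
      _ = ‖(((X:ℝ):ℂ) * a - ((Y:ℝ):ℂ) * b)‖ * ‖v‖ := by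
          rw [norm_mul]
      _ ≤ ‖w‖ * ‖v‖ := mul_le_mul_of_nonneg_right (sqkey' a b w ha hb) (norm_nonneg v)
  calc |2| * |((((X:ℝ):ℂ) * a - ((Y:ℝ):ℂ) * b) * v).re|
      ≤ |2| * (‖w‖ * ‖v‖) := by
        apply mul_le_mul_of_nonneg_left h2 (abs_nonneg 2)
    _ = 2 * ‖w‖ * ‖v‖ := by rw [show |(2:ℝ)| = 2 by norm_num]; ring

lemma pieceEst (a b : ℂ) (ha : ‖a‖ = 1 ∨ a = 0) (hb : ‖b‖ = 1 ∨ b = 0)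
    (γ : ℝ → ℂ) (c d : ℝ) (hcd : c < d) (hγ : ContDiffOn ℝ 1 γ (Set.Icc c d)) :
    IntervalIntegrable (fun t => 2 * ‖γ t‖ * ‖deriv γ t‖)
      MeasureTheory.volume c d ∧
    uCal a b (γ c) - uCal a b (γ d)
      ≤ ∫ t in c..d, 2 * ‖γ t‖ * ‖deriv γ t‖ := by
  have huD : UniqueDiffOn ℝ (Set.Icc c d) := uniqueDiffOn_Icc hcd
  set φ := derivWithin γ (Set.Icc c d) with hφ
  have hφc : ContinuousOn φ (Set.Icc c d) := hγ.continuousOn_derivWithin huD le_rfl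
  have hγc : ContinuousOn γ (Set.Icc c d) := hγ.continuousOn
  have hda : ∀ t ∈ Set.Ioo c d, HasDerivAt γ (φ t) t := by
    intro t ht
    have h1 : DifferentiableWithinAt ℝ γ (Set.Icc c d) t :=
      (hγ.differentiableOn one_ne_zero) t (Set.mem_Icc_of_Ioo ht)
    exact h1.hasDerivWithinAt.hasDerivAt (Icc_mem_nhds ht.1 ht.2)
  have hderiv_eq : ∀ t ∈ Set.Ioo c d, deriv γ t = φ t := fun t ht => (hda t ht).deriv
  -- G: continuous version of integrand
  set G := fun t => 2 * ‖γ t‖ * ‖φ t‖ with hG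
  have hGc : ContinuousOn G (Set.Icc c d) := by
    apply ContinuousOn.mul
    apply ContinuousOn.mul continuousOn_const
    · exact continuous_norm.comp_continuousOn hγc
    · exact continuous_norm.comp_continuousOn hφc
  have hGint : IntervalIntegrable G MeasureTheory.volume c d :=
    (hGc.mono (by rw [Set.uIcc_of_le hcd.le])).intervalIntegrable
  have haeeq : ∀ᵐ t ∂(MeasureTheory.volume : Measure ℝ), t ∈ Set.uIoc c d →
      G t = 2 * ‖γ t‖ * ‖deriv γ t‖ := by
    have hd0 : (MeasureTheory.volume : Measure ℝ) {d} = 0 := measure_singleton d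
    rw [MeasureTheory.ae_iff]
    apply MeasureTheory.measure_mono_null _ hd0
    intro t ht
    simp only [Set.mem_setOf_eq] at ht
    by_contra htd
    apply ht
    intro htmem
    rw [Set.uIoc_of_le hcd.le] at htmem
    have : t ∈ Set.Ioo c d := ⟨htmem.1, lt_of_le_of_ne htmem.2 (by simpa using htd)⟩
    rw [hderiv_eq t this]
  have hint : IntervalIntegrable (fun t => 2 * ‖γ t‖ * ‖deriv γ t‖)
      MeasureTheory.volume c d := by
    apply hGint.congr_ae
    rw [Filter.EventuallyEq, MeasureTheory.ae_restrict_iff' measurableSet_uIoc]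
    exact haeeq
  refine ⟨hint, ?_⟩
  have hinteq : ∫ t in c..d, G t = ∫ t in c..d, 2 * ‖γ t‖ * ‖deriv γ t‖ :=
    intervalIntegral.integral_congr_ae haeeq
  rw [← hinteq]
  -- FTC for F = uCal ∘ γ
  set F := fun t => uCal a b (γ t) with hF
  set ψ := fun t => 2 * max ((a * γ t).re) 0 * (a * φ t).re
      - 2 * max ((b * γ t).re) 0 * (b * φ t).re with hψ
  have hψc : ContinuousOn ψ (Set.Icc c d) := by
    apply ContinuousOn.sub <;>
    · apply ContinuousOn.mul
      apply ContinuousOn.mul continuousOn_const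
      · exact ((continuous_max.comp ((Complex.continuous_re.comp (continuous_const.mul continuous_id)).prodMk continuous_const)).comp_continuousOn hγc)
      · exact (Complex.continuous_re.comp (continuous_const.mul continuous_id)).comp_continuousOn hφc
  have hFd : ∀ t ∈ Set.Ioo c d, HasDerivAt F (ψ t) t := by
    intro t ht
    have hgt := hda t ht
    have hre : ∀ e : ℂ, HasDerivAt (fun u => (e * γ u).re) ((e * φ t).re) t := by
      intro e
      have h1 : HasDerivAt (fun u => e * γ u) (e * φ t) t := hgt.const_mul e
      exact (Complex.reCLM.hasFDerivAt.comp_hasDerivAt t h1)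
    have h2 : HasDerivAt (fun u => (max ((a * γ u).re) 0)^2)
        (2 * max ((a * γ t).re) 0 * (a * φ t).re) t :=
      by have := (hasDerivAt_maxsq ((a * γ t).re)).comp t (hre a); exact this
    have h3 : HasDerivAt (fun u => (max ((b * γ u).re) 0)^2)
        (2 * max ((b * γ t).re) 0 * (b * φ t).re) t :=
      by have := (hasDerivAt_maxsq ((b * γ t).re)).comp t (hre b); exact this
    exact h2.sub h3
  have hψint : IntervalIntegrable ψ MeasureTheory.volume c d :=
    (hψc.mono (by rw [Set.uIcc_of_le hcd.le])).intervalIntegrable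
  have hFc : ContinuousOn F (Set.Icc c d) := by
    apply ContinuousOn.sub <;>
    · apply ContinuousOn.pow
      exact ((continuous_max.comp ((Complex.continuous_re.comp
        (continuous_const.mul continuous_id)).prodMk continuous_const)).comp_continuousOn hγc)
  have hFTC : ∫ t in c..d, ψ t = F d - F c :=
    intervalIntegral.integral_eq_sub_of_hasDerivAt_of_le hcd.le hFc hFd hψint
  have hbound : ∀ t ∈ Set.Icc c d, |ψ t| ≤ G t := by
    intro t ht
    exact gradBound a b ha hb (γ t) (φ t)
  have h5 : F c - F d ≤ ∫ t in c..d, G t := by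
    have h6 : F c - F d = ∫ t in c..d, (fun u => -ψ u) t := by
      rw [intervalIntegral.integral_neg, hFTC]; ring
    rw [h6]
    apply intervalIntegral.integral_mono_on hcd.le hψint.neg hGint
    intro t ht
    have := hbound t ht
    have := neg_abs_le (ψ t)
    simp only [Pi.neg_apply]
    linarith
  exact h5

lemma lowerBound (a b : ℂ) (ha : ‖a‖ = 1 ∨ a = 0) (hb : ‖b‖ = 1 ∨ b = 0)
    (γ : ℝ → ℂ) (hγ : PiecewiseC1 γ) :
    uCal a b (γ 0) - uCal a b (γ 1) ≤ LELength γ := by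
  obtain ⟨hcont, n, s, hmono, h0, h1, hp⟩ := hγ
  have hn : 0 < n := by
    by_contra h
    push_neg at h
    interval_cases n
    rw [show Fin.last 0 = 0 from rfl, h0] at h1
    norm_num at h1
  set A : ℕ → ℝ := fun k => s ⟨min k n, Nat.lt_succ_of_le (min_le_right k n)⟩ with hA
  have hA0 : A 0 = 0 := by
    have h : (⟨min 0 n, Nat.lt_succ_of_le (min_le_right 0 n)⟩ : Fin (n+1)) = 0 := by
      ext; simp
    show s ⟨min 0 n, Nat.lt_succ_of_le (min_le_right 0 n)⟩ = 0
    rw [h, h0]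
  have hAn : A n = 1 := by
    have h : (⟨min n n, Nat.lt_succ_of_le (min_le_right n n)⟩ : Fin (n+1)) = Fin.last n := by
      ext; simp [Fin.last]
    show s ⟨min n n, Nat.lt_succ_of_le (min_le_right n n)⟩ = 1
    rw [h, h1]
  have hkey : ∀ k, k < n →
      IntervalIntegrable (fun t => 2 * ‖γ t‖ * ‖deriv γ t‖)
        MeasureTheory.volume (A k) (A (k+1)) ∧
      uCal a b (γ (A k)) - uCal a b (γ (A (k+1)))
        ≤ ∫ t in (A k)..(A (k+1)), 2 * ‖γ t‖ * ‖deriv γ t‖ := by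
    intro k hk
    have e1 : A k = s ((⟨k, hk⟩ : Fin n).castSucc) := by
      have h : (⟨min k n, Nat.lt_succ_of_le (min_le_right k n)⟩ : Fin (n+1))
          = (⟨k, hk⟩ : Fin n).castSucc := by
        ext; simp [Nat.min_eq_left hk.le]
      show s ⟨min k n, Nat.lt_succ_of_le (min_le_right k n)⟩ = _
      rw [h]
    have e2 : A (k+1) = s ((⟨k, hk⟩ : Fin n).succ) := by
      have h : (⟨min (k+1) n, Nat.lt_succ_of_le (min_le_right (k+1) n)⟩ : Fin (n+1))
          = (⟨k, hk⟩ : Fin n).succ := by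
        ext; simp [Nat.min_eq_left (Nat.succ_le_of_lt hk)]
      show s ⟨min (k+1) n, Nat.lt_succ_of_le (min_le_right (k+1) n)⟩ = _
      rw [h]
    have hlt : A k < A (k+1) := by
      rw [e1, e2]; exact hmono Fin.castSucc_lt_succ
    have := pieceEst a b ha hb γ (A k) (A (k+1)) hlt (by rw [e1, e2]; exact hp ⟨k, hk⟩)
    exact this
  have hsum : ∑ k ∈ Finset.range n,
      ∫ t in (A k)..(A (k+1)), 2 * ‖γ t‖ * ‖deriv γ t‖
      = LELength γ := by
    rw [intervalIntegral.sum_integral_adjacent_intervals (fun k hk => (hkey k hk).1)]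
    rw [hA0, hAn, LELength]
  have htel : uCal a b (γ 0) - uCal a b (γ 1)
      = ∑ k ∈ Finset.range n, (uCal a b (γ (A k)) - uCal a b (γ (A (k+1)))) := by
    rw [Finset.sum_range_sub' (fun k => uCal a b (γ (A k))) n, hA0, hAn]
  rw [htel, ← hsum]
  exact Finset.sum_le_sum (fun k hk => (hkey k (Finset.mem_range.mp hk)).2)

noncomputable def pathAB (A B : ℂ) : ℝ → ℂ :=
  fun t => if t ≤ 1/2 then (1 - 2*(t:ℂ))*A else (2*(t:ℂ) - 1)*B

lemma contDiff_f1 (A : ℂ) : ContDiff ℝ 1 (fun t : ℝ => (1 - 2*(t:ℂ))*A) :=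
  ((contDiff_const.sub (contDiff_const.mul Complex.ofRealCLM.contDiff)).mul contDiff_const)

lemma contDiff_f2 (B : ℂ) : ContDiff ℝ 1 (fun t : ℝ => (2*(t:ℂ) - 1)*B) :=
  (((contDiff_const.mul Complex.ofRealCLM.contDiff).sub contDiff_const).mul contDiff_const)

lemma pathAB_at0 (A B : ℂ) : pathAB A B 0 = A := by
  rw [pathAB]; norm_num

lemma pathAB_at1 (A B : ℂ) : pathAB A B 1 = B := by
  rw [pathAB]; norm_num

lemma pathAB_pc1 (A B : ℂ) : PiecewiseC1 (pathAB A B) := by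
  constructor
  · apply Continuous.continuousOn
    apply Continuous.if_le ((contDiff_f1 A).continuous) ((contDiff_f2 B).continuous)
      continuous_id continuous_const
    intro x hx
    have hx' : x = 1/2 := hx
    rw [hx']; norm_num
  · refine ⟨2, ![0, 1/2, 1], ?_, rfl, ?_, ?_⟩
    · rw [Fin.strictMono_iff_lt_succ]
      intro i
      fin_cases i <;> simp [Matrix.cons_val] <;> norm_num
    · norm_num [Fin.last]
    · intro i
      fin_cases i
      · show ContDiffOn ℝ 1 _ (Set.Icc 0 (1/2))
        apply (contDiff_f1 A).contDiffOn.congr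
        intro t ht
        exact if_pos ht.2
      · show ContDiffOn ℝ 1 _ (Set.Icc (1/2) 1)
        apply (contDiff_f2 B).contDiffOn.congr
        intro t ht
        by_cases h : t ≤ 1/2
        · have : t = 1/2 := le_antisymm h ht.1
          subst this
          rw [pathAB, if_pos le_rfl]
          norm_num
        · exact if_neg h

lemma pathAB_deriv1 (A B : ℂ) {t : ℝ} (ht : t < 1/2) :
    deriv (pathAB A B) t = (-2)*A := by
  have heq : pathAB A B =ᶠ[nhds t] (fun u : ℝ => (1 - 2*(u:ℂ))*A) := by
    filter_upwards [Iio_mem_nhds ht] with u hu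
    exact if_pos (le_of_lt hu)
  rw [heq.deriv_eq]
  have hof : HasDerivAt (fun u:ℝ => ((u:ℝ):ℂ)) 1 t := by
    simpa using (hasDerivAt_id t).ofReal_comp
  have h1 : HasDerivAt (fun u:ℝ => (1 - 2*(u:ℂ))) (-2) t := by
    simpa using (hof.const_mul (2:ℂ)).const_sub 1
  exact (h1.mul_const A).deriv
    |>.trans rfl

lemma pathAB_deriv2 (A B : ℂ) {t : ℝ} (ht : 1/2 < t) :
    deriv (pathAB A B) t = 2*B := by
  have heq : pathAB A B =ᶠ[nhds t] (fun u : ℝ => (2*(u:ℂ) - 1)*B) := by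
    filter_upwards [Ioi_mem_nhds ht] with u hu
    exact if_neg (not_le.mpr hu)
  rw [heq.deriv_eq]
  have hof : HasDerivAt (fun u:ℝ => ((u:ℝ):ℂ)) 1 t := by
    simpa using (hasDerivAt_id t).ofReal_comp
  have h1 : HasDerivAt (fun u:ℝ => (2*(u:ℂ) - 1)) 2 t := by
    simpa using (hof.const_mul (2:ℂ)).sub_const 1
  exact (h1.mul_const B).deriv |>.trans (by ring)

lemma pathAB_eq1 (A B : ℂ) : ∀ t ∈ Set.Icc (0:ℝ) (1/2),
    2 * ‖pathAB A B t‖ * ‖deriv (pathAB A B) t‖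
      = (4 - 8*t) * (‖A‖)^2 := by
  intro t ht
  rcases eq_or_lt_of_le ht.2 with h | h
  · subst h
    have hval : pathAB A B (1/2) = 0 := by rw [pathAB, if_pos le_rfl]; norm_num
    rw [hval]
    norm_num
  · rw [pathAB_deriv1 A B h]
    have hval : pathAB A B t = (((1 - 2*t : ℝ)):ℂ)*A := by
      rw [pathAB, if_pos ht.2]; push_cast; ring_nf
    rw [hval, norm_mul, Complex.norm_real, Real.norm_eq_abs, norm_mul,
      _root_.abs_of_nonneg (by linarith : (0:ℝ) ≤ 1 - 2*t),
      show ‖(-2:ℂ)‖ = 2 by norm_num]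
    ring

lemma pathAB_eq2 (A B : ℂ) : ∀ t ∈ Set.Icc (1/2 : ℝ) 1,
    2 * ‖pathAB A B t‖ * ‖deriv (pathAB A B) t‖
      = (8*t - 4) * (‖B‖)^2 := by
  intro t ht
  rcases eq_or_lt_of_le ht.1 with h | h
  · rw [← h]
    have hval : pathAB A B (1/2) = 0 := by rw [pathAB, if_pos le_rfl]; norm_num
    rw [hval]
    norm_num
  · rw [pathAB_deriv2 A B h]
    have hval : pathAB A B t = (((2*t - 1 : ℝ)):ℂ)*B := by
      rw [pathAB, if_neg (not_le.mpr h)]; push_cast; ring_nf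
    rw [hval, norm_mul, Complex.norm_real, Real.norm_eq_abs, norm_mul,
      _root_.abs_of_nonneg (by linarith : (0:ℝ) ≤ 2*t - 1),
      show ‖(2:ℂ)‖ = 2 by norm_num]
    ring

lemma pathAB_len (A B : ℂ) :
    LELength (pathAB A B) = (‖A‖)^2 + (‖B‖)^2 := by
  set g := fun t => 2 * ‖pathAB A B t‖ * ‖deriv (pathAB A B) t‖ with hg
  have hcg1 : ContinuousOn g (Set.Icc (0:ℝ) (1/2)) := by
    apply ContinuousOn.congr (f := fun t => (4 - 8*t) * (‖A‖)^2)
    · fun_prop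
    · intro t ht; exact pathAB_eq1 A B t ht
  have hcg2 : ContinuousOn g (Set.Icc (1/2 : ℝ) 1) := by
    apply ContinuousOn.congr (f := fun t => (8*t - 4) * (‖B‖)^2)
    · fun_prop
    · intro t ht; exact pathAB_eq2 A B t ht
  have hint1 : IntervalIntegrable g MeasureTheory.volume 0 (1/2) :=
    (hcg1.mono (by rw [Set.uIcc_of_le (by norm_num : (0:ℝ) ≤ 1/2)])).intervalIntegrable
  have hint2 : IntervalIntegrable g MeasureTheory.volume (1/2) 1 :=
    (hcg2.mono (by rw [Set.uIcc_of_le (by norm_num : (1/2:ℝ) ≤ 1)])).intervalIntegrable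
  have hsplit : (∫ t in (0:ℝ)..(1/2), g t) + ∫ t in (1/2:ℝ)..1, g t = ∫ t in (0:ℝ)..1, g t :=
    intervalIntegral.integral_add_adjacent_intervals hint1 hint2
  have hI1 : ∫ t in (0:ℝ)..(1/2), g t = (‖A‖)^2 := by
    rw [intervalIntegral.integral_congr (g := fun t => (4 - 8*t) * (‖A‖)^2)
      (by rw [Set.uIcc_of_le (by norm_num : (0:ℝ) ≤ 1/2)]; exact fun t ht => pathAB_eq1 A B t ht)]
    rw [intervalIntegral.integral_mul_const]
    have : ∫ t in (0:ℝ)..(1/2), (4 - 8*t) = 1 := by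
      rw [intervalIntegral.integral_sub intervalIntegrable_const
        (((continuous_mul_left (8:ℝ)).intervalIntegrable _ _))]
      rw [intervalIntegral.integral_const_mul, intervalIntegral.integral_const,
        integral_id]
      norm_num
    rw [this, one_mul]
  have hI2 : ∫ t in (1/2:ℝ)..1, g t = (‖B‖)^2 := by
    rw [intervalIntegral.integral_congr (g := fun t => (8*t - 4) * (‖B‖)^2)
      (by rw [Set.uIcc_of_le (by norm_num : (1/2:ℝ) ≤ 1)]; exact fun t ht => pathAB_eq2 A B t ht)]
    rw [intervalIntegral.integral_mul_const]
    have : ∫ t in (1/2:ℝ)..1, (8*t - 4) = 1 := by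
      rw [intervalIntegral.integral_sub
        (((continuous_mul_left (8:ℝ)).intervalIntegrable _ _)) intervalIntegrable_const]
      rw [intervalIntegral.integral_const_mul, intervalIntegral.integral_const,
        integral_id]
      norm_num
    rw [this, one_mul]
  rw [LELength, ← hg, ← hsplit, hI1, hI2]

lemma calib_norm (A : ℂ) (hA : A ≠ 0) :
    ‖(starRingEnd ℂ) A / ((‖A‖ : ℝ) : ℂ)‖ = 1 := by
  rw [norm_div, RCLike.norm_conj, Complex.norm_real, Real.norm_eq_abs,
    _root_.abs_of_nonneg (norm_nonneg _),
    div_self (norm_ne_zero_iff.mpr hA)]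

lemma calib_self (A : ℂ) (hA : A ≠ 0) :
    ((starRingEnd ℂ) A / ((‖A‖ : ℝ):ℂ) * A).re = ‖A‖ := by
  have h1 : (starRingEnd ℂ) A * A = ((‖A‖^2 : ℝ) : ℂ) := by
    rw [mul_comm, Complex.mul_conj, Complex.normSq_eq_norm_sq]
  rw [div_mul_eq_mul_div, h1, ← Complex.ofReal_div, Complex.ofReal_re, sq,
    mul_div_assoc, div_self (norm_ne_zero_iff.mpr hA), mul_one]

lemma calib_cross (A w : ℂ) :
    ((starRingEnd ℂ) A / ((‖A‖ : ℝ):ℂ) * w).re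
      = (w * (starRingEnd ℂ) A).re / ‖A‖ := by
  rw [div_mul_eq_mul_div, mul_comm ((starRingEnd ℂ) A) w, Complex.div_ofReal_re]

lemma re_mul_conj_comm (A B : ℂ) : (B * (starRingEnd ℂ) A).re = (A * (starRingEnd ℂ) B).re := by
  simp [Complex.mul_re, Complex.conj_re, Complex.conj_im]; ring

lemma uCal_vals (A B : ℂ) (hre : (A * (starRingEnd ℂ) B).re ≤ 0) :
    ∃ a b : ℂ, (‖a‖ = 1 ∨ a = 0) ∧ (‖b‖ = 1 ∨ b = 0) ∧
      uCal a b A = (‖A‖)^2 ∧ uCal a b B = -((‖B‖)^2) := by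
  classical
  refine ⟨if A = 0 then 0 else (starRingEnd ℂ) A / ((‖A‖ : ℝ) : ℂ),
    if B = 0 then 0 else (starRingEnd ℂ) B / ((‖B‖ : ℝ) : ℂ), ?_, ?_, ?_, ?_⟩
  · by_cases hA : A = 0
    · right; rw [if_pos hA]
    · left; rw [if_neg hA]; exact calib_norm A hA
  · by_cases hB : B = 0
    · right; rw [if_pos hB]
    · left; rw [if_neg hB]; exact calib_norm B hB
  · -- uCal at A
    have hterm2 : (max (((if B = 0 then 0 else (starRingEnd ℂ) B / ((‖B‖ : ℝ) : ℂ)) * A).re) 0) = 0 := by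
      by_cases hB : B = 0
      · rw [if_pos hB]; simp
      · rw [if_neg hB, calib_cross B A]
        apply max_eq_right
        apply div_nonpos_of_nonpos_of_nonneg _ (norm_nonneg _)
        exact hre
    by_cases hA : A = 0
    · rw [uCal, hterm2, if_pos hA]
      simp [hA]
    · rw [uCal, hterm2, if_neg hA, calib_self A hA,
        max_eq_left (norm_nonneg _)]
      norm_num
  · -- uCal at B
    have hterm1 : (max (((if A = 0 then 0 else (starRingEnd ℂ) A / ((‖A‖ : ℝ) : ℂ)) * B).re) 0) = 0 := by
      by_cases hA : A = 0
      · rw [if_pos hA]; simp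
      · rw [if_neg hA, calib_cross A B]
        apply max_eq_right
        apply div_nonpos_of_nonpos_of_nonneg _ (norm_nonneg _)
        rw [re_mul_conj_comm]; exact hre
    by_cases hB : B = 0
    · rw [uCal, hterm1, if_pos hB]
      simp [hB]
    · rw [uCal, hterm1, if_neg hB, calib_self B hB,
        max_eq_left (norm_nonneg _)]
      norm_num

/-- If `Re(A·conj B) ≤ 0` then `dLE(A,B) = |A|² + |B|²`; in particular
`dLE(A,0) = |A|²` for every `A`. -/
theorem dLE_eq_of_re_nonpos :
    (∀ A B : ℂ, (A * (starRingEnd ℂ) B).re ≤ 0 →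
      dLE A B = ‖A‖ ^ 2 + ‖B‖ ^ 2) ∧
    (∀ A : ℂ, dLE A 0 = ‖A‖ ^ 2) := by
  have main : ∀ A B : ℂ, (A * (starRingEnd ℂ) B).re ≤ 0 →
      dLE A B = ‖A‖ ^ 2 + ‖B‖ ^ 2 := by
    intro A B hre
    have hmem : ‖A‖ ^ 2 + ‖B‖ ^ 2 ∈
        {L : ℝ | ∃ γ : ℝ → ℂ, PiecewiseC1 γ ∧ γ 0 = A ∧ γ 1 = B ∧ LELength γ = L} :=
      ⟨pathAB A B, pathAB_pc1 A B, pathAB_at0 A B, pathAB_at1 A B, pathAB_len A B⟩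
    have hbdd : BddBelow
        {L : ℝ | ∃ γ : ℝ → ℂ, PiecewiseC1 γ ∧ γ 0 = A ∧ γ 1 = B ∧ LELength γ = L} := by
      refine ⟨0, fun L hL => ?_⟩
      obtain ⟨γ, _, _, _, hlen⟩ := hL
      rw [← hlen, LELength]
      apply intervalIntegral.integral_nonneg (by norm_num)
      intro u _
      have h1 : (0:ℝ) ≤ ‖γ u‖ := norm_nonneg _
      have h2 : (0:ℝ) ≤ ‖deriv γ u‖ := norm_nonneg _
      nlinarith
    obtain ⟨a, b, ha, hb, hUA, hUB⟩ := uCal_vals A B hre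
    apply le_antisymm (csInf_le hbdd hmem)
    apply le_csInf ⟨_, hmem⟩
    intro L hL
    obtain ⟨γ, hp, h0, h1, hlen⟩ := hL
    have hlow := lowerBound a b ha hb γ hp
    rw [h0, h1, hUA, hUB] at hlow
    rw [← hlen]
    linarith
  refine ⟨main, fun A => ?_⟩
  have h := main A 0 (by simp)
  simpa using h
end

section
/- The log-euclidean plane X = (ℂ, dLE) is a complete metric space. -/
open Complex Set

open MeasureTheory intervalIntegral Filter


variable {E : Type*} [NormedAddCommGroup E] [NormedSpace ℝ E] [CompleteSpace E]

lemma piece_bound (γ : ℝ → ℂ) (hcont : ContinuousOn γ (Icc 0 1))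
    {c d : ℝ} (hc0 : 0 ≤ c) (hd1 : d ≤ 1) (hp : ContDiffOn ℝ 1 γ (Icc c d))
    (φ : ℂ → E) (φ' : ℂ → ℂ →L[ℝ] E) (hφ : ∀ z, HasFDerivAt φ (φ' z) z)
    (hφc : Continuous (fun p : ℂ × ℂ => φ' p.1 p.2))
    (hbnd : ∀ t ∈ Icc (0:ℝ) 1, ∀ v : ℂ, ‖φ' (γ t) v‖ ≤ 2 * ‖γ t‖ * ‖v‖)
    {a b : ℝ} (hca : c ≤ a) (hab : a ≤ b) (hbd : b ≤ d) :
    ‖φ (γ b) - φ (γ a)‖ ≤ (∫ t in a..b, 2 * ‖γ t‖ * ‖deriv γ t‖)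
    ∧ IntervalIntegrable (fun t => 2 * ‖γ t‖ * ‖deriv γ t‖) volume a b := by
  rcases eq_or_lt_of_le hab with rfl | hab'
  · simp [IntervalIntegrable.refl]
  have hcd : c < d := lt_of_le_of_lt hca (lt_of_lt_of_le hab' hbd)
  set D := derivWithin γ (Icc c d) with hD
  have hDcont : ContinuousOn D (Icc c d) :=
    hp.continuousOn_derivWithin (uniqueDiffOn_Icc hcd) le_rfl
  have hIccsub : Icc a b ⊆ Icc c d := Icc_subset_Icc hca hbd
  have hsub01 : Icc a b ⊆ Icc 0 1 := Icc_subset_Icc (hc0.trans hca) (hbd.trans hd1)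
  have hderiv : ∀ t ∈ Ioo a b, HasDerivAt γ (D t) t ∧ deriv γ t = D t := by
    intro t ht
    have htm : Icc c d ∈ nhds t :=
      Icc_mem_nhds (lt_of_le_of_lt hca ht.1) (lt_of_lt_of_le ht.2 hbd)
    have hdiff : DifferentiableAt ℝ γ t :=
      ((hp.differentiableOn one_ne_zero) t (hIccsub (Ioo_subset_Icc_self ht))).differentiableAt htm
    have he : D t = deriv γ t := derivWithin_of_mem_nhds htm
    exact ⟨he ▸ hdiff.hasDerivAt, he.symm⟩
  have hγab : ContinuousOn γ (Icc a b) := hcont.mono hsub01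
  set F' := fun t => φ' (γ t) (D t) with hF'
  have hF'cont : ContinuousOn F' (Icc a b) :=
    hφc.comp_continuousOn (f := fun t => (γ t, D t)) (hγab.prodMk (hDcont.mono hIccsub))
  have hφcont : Continuous φ := by
    rw [continuous_iff_continuousAt]; exact fun z => (hφ z).continuousAt
  have hFTC : (∫ t in a..b, F' t) = φ (γ b) - φ (γ a) := by
    apply integral_eq_sub_of_hasDeriv_right_of_le hab
      (hφcont.comp_continuousOn hγab)
      (fun t ht => (((hφ (γ t)).comp_hasDerivAt t (hderiv t ht).1)).hasDerivWithinAt)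
      (hF'cont.intervalIntegrable_of_Icc hab)
  set G := fun t => 2 * ‖γ t‖ * ‖D t‖ with hG
  have hGcont : ContinuousOn G (Icc a b) :=
    (continuousOn_const.mul (continuous_norm.comp_continuousOn hγab)).mul
      (continuous_norm.comp_continuousOn (hDcont.mono hIccsub))
  have hGint : IntervalIntegrable G volume a b := hGcont.intervalIntegrable_of_Icc hab
  have h1 : ‖φ (γ b) - φ (γ a)‖ ≤ ∫ t in a..b, ‖F' t‖ := by
    rw [← hFTC]; exact norm_integral_le_integral_norm hab
  have h2 : (∫ t in a..b, ‖F' t‖) ≤ ∫ t in a..b, G t := by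
    apply integral_mono_on hab (hF'cont.norm.intervalIntegrable_of_Icc hab) hGint
    intro t ht
    exact hbnd t (hsub01 ht) (D t)
  have heq : (∫ t in a..b, G t)
      = ∫ t in a..b, 2 * ‖γ t‖ * ‖deriv γ t‖ := by
    rw [integral_of_le hab, integral_of_le hab, integral_Ioc_eq_integral_Ioo,
      integral_Ioc_eq_integral_Ioo]
    exact (setIntegral_congr_fun measurableSet_Ioo
      (fun t ht => by rw [(hderiv t ht).2])).symm
  have hint : IntervalIntegrable (fun t => 2 * ‖γ t‖ * ‖deriv γ t‖)
      volume a b := by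
    rw [intervalIntegrable_iff_integrableOn_Ioo_of_le hab]
    refine IntegrableOn.congr_fun ?_ (fun t ht => by rw [(hderiv t ht).2]) measurableSet_Ioo
    exact (hGint.1.mono_set Ioo_subset_Ioc_self)
  exact ⟨heq ▸ (h1.trans h2), hint⟩



lemma key_bound (γ : ℝ → ℂ) (hγ : PiecewiseC1 γ)
    (φ : ℂ → E) (φ' : ℂ → ℂ →L[ℝ] E) (hφ : ∀ z, HasFDerivAt φ (φ' z) z)
    (hφc : Continuous (fun p : ℂ × ℂ => φ' p.1 p.2))
    (hbnd : ∀ t ∈ Icc (0:ℝ) 1, ∀ v : ℂ, ‖φ' (γ t) v‖ ≤ 2 * ‖γ t‖ * ‖v‖)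
    {a b : ℝ} (h0a : 0 ≤ a) (hab : a ≤ b) (hb1 : b ≤ 1) :
    ‖φ (γ b) - φ (γ a)‖ ≤ (∫ t in a..b, 2 * ‖γ t‖ * ‖deriv γ t‖)
    ∧ IntervalIntegrable (fun t => 2 * ‖γ t‖ * ‖deriv γ t‖) volume a b := by
  obtain ⟨hcont, n, s, hmono, hs0, hsl, hpieces⟩ := hγ
  set σ : ℕ → ℝ := fun k => s ⟨min k n, Nat.lt_succ_of_le (min_le_right _ _)⟩ with hσ
  set τ : ℕ → ℝ := fun k => max a (min b (σ k)) with hτ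
  have hσmono : Monotone σ := by
    intro i j hij
    exact hmono.monotone (by simp [Fin.le_def]; omega)
  have hτmono : Monotone τ := fun i j hij =>
    max_le_max le_rfl (min_le_min le_rfl (hσmono hij))
  have hσ0 : σ 0 = 0 := by
    have : (⟨min 0 n, Nat.lt_succ_of_le (min_le_right _ _)⟩ : Fin (n+1)) = 0 := by
      simp [Fin.ext_iff]
    show s _ = 0; rw [this]; exact hs0
  have hσn : σ n = 1 := by
    have : (⟨min n n, Nat.lt_succ_of_le (min_le_right _ _)⟩ : Fin (n+1)) = Fin.last n := by
      simp [Fin.ext_iff]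
    show s _ = 1; rw [this]; exact hsl
  have hτ0 : τ 0 = a := by
    show a ⊔ b ⊓ σ 0 = a
    rw [hσ0, min_eq_right (h0a.trans hab), max_eq_left h0a]
  have hτn : τ n = b := by
    show a ⊔ b ⊓ σ n = b
    rw [hσn, min_eq_left hb1, max_eq_right hab]
  have hτab : ∀ k, a ≤ τ k ∧ τ k ≤ b := by
    intro k
    exact ⟨le_max_left _ _, max_le hab (min_le_left _ _)⟩
  -- main per-piece estimate
  have Hk : ∀ k < n, ‖φ (γ (τ (k+1))) - φ (γ (τ k))‖
      ≤ (∫ t in (τ k)..(τ (k+1)), 2 * ‖γ t‖ * ‖deriv γ t‖)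
      ∧ IntervalIntegrable (fun t => 2 * ‖γ t‖ * ‖deriv γ t‖)
          volume (τ k) (τ (k+1)) := by
    intro k hk
    by_cases he : τ k = τ (k+1)
    · rw [he]; simp [IntervalIntegrable.refl]
    have hlt : τ k < τ (k+1) := lt_of_le_of_ne (hτmono (Nat.le_succ k)) he
    have hσk : σ k = s (⟨k, hk⟩ : Fin n).castSucc := by
      show s _ = s _
      congr 1
      simp [Fin.ext_iff, Nat.min_eq_left hk.le]
    have hσk1 : σ (k+1) = s (⟨k, hk⟩ : Fin n).succ := by
      show s _ = s _
      congr 1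
      simp [Fin.ext_iff, Nat.min_eq_left hk]
    -- containment
    have h1 : σ k ≤ τ k := by
      rcases le_total (σ k) b with h | h
      · calc σ k = min b (σ k) := (min_eq_right h).symm
          _ ≤ τ k := le_max_right _ _
      · exfalso
        have : τ (k+1) ≤ b := (hτab _).2
        have : τ k = b := le_antisymm (hτab _).2 (by
          calc b = min b (σ k) := (min_eq_left h).symm
            _ ≤ τ k := le_max_right _ _)
        linarith
    have h2 : τ (k+1) ≤ σ (k+1) := by
      rcases le_total a (σ (k+1)) with h | h
      · exact max_le h (min_le_right _ _)
      · exfalso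
        have : τ (k+1) = a := max_eq_left ((min_le_right b (σ (k+1))).trans h)
        linarith [(hτab k).1]
    have hres := piece_bound γ hcont
      (show (0:ℝ) ≤ s (⟨k, hk⟩ : Fin n).castSucc by
        rw [← hσk]; rw [← hσ0]; exact hσmono (Nat.zero_le k))
      (show s (⟨k, hk⟩ : Fin n).succ ≤ 1 by
        rw [← hσk1]; rw [← hσn]; exact hσmono hk)
      (hpieces ⟨k, hk⟩) φ φ' hφ hφc hbnd
      (show s (⟨k, hk⟩ : Fin n).castSucc ≤ τ k by rw [← hσk]; exact h1)
      hlt.le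
      (show τ (k+1) ≤ s (⟨k, hk⟩ : Fin n).succ by rw [← hσk1]; exact h2)
    exact hres
  constructor
  · have e1 : ‖φ (γ b) - φ (γ a)‖ = dist (φ (γ (τ 0))) (φ (γ (τ n))) := by
      rw [hτ0, hτn, dist_eq_norm, norm_sub_rev]
    have e2 : dist (φ (γ (τ 0))) (φ (γ (τ n)))
        ≤ ∑ i ∈ Finset.range n, dist (φ (γ (τ i))) (φ (γ (τ (i+1)))) :=
      dist_le_range_sum_dist (fun k => φ (γ (τ k))) n
    have e3 : (∑ i ∈ Finset.range n, dist (φ (γ (τ i))) (φ (γ (τ (i+1)))))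
        ≤ ∑ i ∈ Finset.range n,
          ∫ t in (τ i)..(τ (i+1)), 2 * ‖γ t‖ * ‖deriv γ t‖ :=
      Finset.sum_le_sum (fun i hi => by
        rw [dist_eq_norm, norm_sub_rev]
        exact (Hk i (Finset.mem_range.mp hi)).1)
    have e4 : (∑ i ∈ Finset.range n,
          ∫ t in (τ i)..(τ (i+1)), 2 * ‖γ t‖ * ‖deriv γ t‖)
        = ∫ t in a..b, 2 * ‖γ t‖ * ‖deriv γ t‖ := by
      rw [← hτ0, ← hτn]
      exact sum_integral_adjacent_intervals (fun k hk => (Hk k hk).2)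
    rw [e1, ← e4]
    exact e2.trans e3
  · have := IntervalIntegrable.trans_iterate (fun k hk => (Hk k hk).2)
    rwa [hτ0, hτn] at this





noncomputable def seg (A B : ℂ) : ℝ → ℂ := fun t => A + t • (B - A)

lemma seg_hasDerivAt (A B : ℂ) (t : ℝ) : HasDerivAt (seg A B) (B - A) t := by
  have h := ((hasDerivAt_id t).smul_const (B - A)).const_add A
  rw [one_smul] at h
  exact h

lemma seg_contDiff (A B : ℂ) : ContDiff ℝ 1 (seg A B) :=
  contDiff_const.add (contDiff_id.smul contDiff_const)

lemma seg_pc1 (A B : ℂ) : PiecewiseC1 (seg A B) := by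
  refine ⟨(seg_contDiff A B).continuous.continuousOn, 1, ![0, 1], ?_, ?_, ?_, ?_⟩
  · intro i j hij
    fin_cases i <;> fin_cases j <;> simp_all <;> norm_num
  · rfl
  · rfl
  · intro i
    exact (seg_contDiff A B).contDiffOn

lemma seg_zero (A B : ℂ) : seg A B 0 = A := by simp [seg]
lemma seg_one (A B : ℂ) : seg A B 1 = B := by simp [seg]

lemma LELength_seg_le (A B : ℂ) :
    LELength (seg A B) ≤ 2 * (‖A‖ + ‖B‖) * ‖B - A‖ := by
  have hd : ∀ t : ℝ, deriv (seg A B) t = B - A := fun t => (seg_hasDerivAt A B t).deriv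
  have hle : ∀ t ∈ Icc (0:ℝ) 1,
      2 * ‖seg A B t‖ * ‖deriv (seg A B) t‖
      ≤ 2 * (‖A‖ + ‖B‖) * ‖B - A‖ := by
    intro t ht
    rw [hd t]
    have h1 : ‖seg A B t‖ ≤ ‖A‖ + ‖B‖ := by
      have e : seg A B t = (1 - t) • A + t • B := by
        simp only [seg, smul_sub, sub_smul, one_smul]; ring
      have h2 := norm_add_le ((1 - t) • A) (t • B)
      rw [norm_smul, norm_smul, Real.norm_eq_abs, Real.norm_eq_abs,
        _root_.abs_of_nonneg (by linarith [ht.2] : (0:ℝ) ≤ 1 - t), _root_.abs_of_nonneg ht.1] at h2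
      rw [e]
      nlinarith [norm_nonneg A, norm_nonneg B, ht.1, ht.2]
    nlinarith [norm_nonneg (B - A), norm_nonneg (seg A B t)]
  have hint : IntervalIntegrable
      (fun t => 2 * ‖seg A B t‖ * ‖deriv (seg A B) t‖) volume 0 1 := by
    apply ContinuousOn.intervalIntegrable_of_Icc zero_le_one
    have : ∀ t ∈ Icc (0:ℝ) 1, 2 * ‖seg A B t‖ * ‖deriv (seg A B) t‖
        = 2 * ‖seg A B t‖ * ‖B - A‖ := fun t _ => by rw [hd t]
    refine ContinuousOn.congr ?_ (fun t ht => this t ht)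
    exact (continuousOn_const.mul
      (continuous_norm.comp_continuousOn (seg_contDiff A B).continuous.continuousOn)).mul
      continuousOn_const
  calc LELength (seg A B)
      ≤ ∫ t in (0:ℝ)..1, 2 * (‖A‖ + ‖B‖) * ‖B - A‖ :=
        integral_mono_on zero_le_one hint intervalIntegrable_const hle
    _ = 2 * (‖A‖ + ‖B‖) * ‖B - A‖ := by simp

lemma dLE_set_nonempty (A B : ℂ) :
    {L : ℝ | ∃ γ : ℝ → ℂ, PiecewiseC1 γ ∧ γ 0 = A ∧ γ 1 = B ∧ LELength γ = L}.Nonempty :=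
  ⟨LELength (seg A B), seg A B, seg_pc1 A B, seg_zero A B, seg_one A B, rfl⟩

lemma dLE_set_bddBelow (A B : ℂ) :
    BddBelow {L : ℝ | ∃ γ : ℝ → ℂ, PiecewiseC1 γ ∧ γ 0 = A ∧ γ 1 = B ∧ LELength γ = L} := by
  refine ⟨0, ?_⟩
  rintro L ⟨γ, _, _, _, rfl⟩
  exact intervalIntegral.integral_nonneg zero_le_one (fun u _ => by positivity)

lemma dLE_le (A B : ℂ) :
    dLE A B ≤ 2 * (‖A‖ + ‖B‖) * ‖B - A‖ :=
  (csInf_le (dLE_set_bddBelow A B)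
    ⟨seg A B, seg_pc1 A B, seg_zero A B, seg_one A B, rfl⟩).trans (LELength_seg_le A B)

/-- squaring map instance -/
noncomputable def sqD (z : ℂ) : ℂ →L[ℝ] ℂ :=
  ((1 : ℂ →L[ℂ] ℂ).smulRight (2 * z)).restrictScalars ℝ

lemma sqD_apply (z v : ℂ) : sqD z v = v * (2 * z) := by
  simp [sqD]

lemma sq_hasFDerivAt (z : ℂ) : HasFDerivAt (fun z : ℂ => z ^ 2) (sqD z) z := by
  have h : HasDerivAt (fun z : ℂ => z ^ 2) (2 * z) z := by
    simpa [mul_comm] using hasDerivAt_pow 2 z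
  exact h.hasFDerivAt.restrictScalars ℝ

lemma sqD_cont : Continuous (fun p : ℂ × ℂ => sqD p.1 p.2) := by
  simp only [sqD_apply]
  continuity

lemma sqD_bound (z v : ℂ) : ‖sqD z v‖ ≤ 2 * ‖z‖ * ‖v‖ := by
  rw [sqD_apply, norm_mul, norm_mul]
  simp [Complex.norm_two]
  ring_nf
  exact le_rfl

lemma dLE_lower_sq (A B : ℂ) : ‖B ^ 2 - A ^ 2‖ ≤ dLE A B := by
  apply le_csInf (dLE_set_nonempty A B)
  rintro L ⟨γ, hγ, h0, h1, rfl⟩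
  have := (key_bound γ hγ (fun z => z ^ 2) sqD sq_hasFDerivAt sqD_cont
    (fun t _ v => sqD_bound (γ t) v) le_rfl zero_le_one le_rfl).1
  rw [h0, h1] at this
  exact this

/-- norm-squared map instance -/
noncomputable def nsD (z : ℂ) : ℂ →L[ℝ] ℝ :=
  z.re • Complex.reCLM + z.re • Complex.reCLM + (z.im • Complex.imCLM + z.im • Complex.imCLM)

lemma nsD_apply (z v : ℂ) :
    nsD z v = z.re * v.re + z.re * v.re + (z.im * v.im + z.im * v.im) := by
  simp [nsD]

lemma ns_hasFDerivAt (z : ℂ) :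
    HasFDerivAt (fun z : ℂ => z.re * z.re + z.im * z.im) (nsD z) z := by
  exact ((Complex.reCLM.hasFDerivAt.mul Complex.reCLM.hasFDerivAt).add
    (Complex.imCLM.hasFDerivAt.mul Complex.imCLM.hasFDerivAt))

lemma nsD_cont : Continuous (fun p : ℂ × ℂ => nsD p.1 p.2) := by
  simp only [nsD_apply]
  continuity

lemma nsD_bound (z v : ℂ) : ‖nsD z v‖ ≤ 2 * ‖z‖ * ‖v‖ := by
  rw [nsD_apply]
  have h1 : z.re * v.re + z.re * v.re + (z.im * v.im + z.im * v.im)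
      = 2 * ((starRingEnd ℂ) z * v).re := by
    simp [Complex.mul_re]; ring
  rw [h1, Real.norm_eq_abs, abs_mul]
  have h2 : |((starRingEnd ℂ) z * v).re| ≤ ‖z‖ * ‖v‖ := by
    calc |((starRingEnd ℂ) z * v).re| ≤ ‖(starRingEnd ℂ) z * v‖ :=
        Complex.abs_re_le_norm _
      _ = ‖z‖ * ‖v‖ := by rw [norm_mul, Complex.norm_conj]
  calc |(2:ℝ)| * |((starRingEnd ℂ) z * v).re| = 2 * |((starRingEnd ℂ) z * v).re| := by norm_num
    _ ≤ 2 * (‖z‖ * ‖v‖) := by linarith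
    _ = 2 * ‖z‖ * ‖v‖ := by ring

/-- scaled identity instance -/
noncomputable def scD (r : ℝ) : ℂ →L[ℝ] ℂ := (2 * r) • (ContinuousLinearMap.id ℝ ℂ)

lemma scD_apply (r : ℝ) (v : ℂ) : scD r v = (2 * r) • v := rfl

lemma sc_hasFDerivAt (r : ℝ) (z : ℂ) :
    HasFDerivAt (fun z : ℂ => (2 * r) • z) (scD r) z :=
  (hasFDerivAt_id z).const_smul (2 * r)

lemma scD_cont (r : ℝ) : Continuous (fun p : ℂ × ℂ => scD r p.2) := by
  simp only [scD_apply]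
  continuity

lemma dLE_lower_min (A B : ℂ) (r : ℝ) (hr : 0 ≤ r) :
    min (2 * r * ‖B - A‖)
      (‖A‖ ^ 2 + ‖B‖ ^ 2 - 2 * r ^ 2) ≤ dLE A B := by
  apply le_csInf (dLE_set_nonempty A B)
  rintro L ⟨γ, hγ, h0, h1, rfl⟩
  by_cases hc : ∀ t ∈ Icc (0:ℝ) 1, r ≤ ‖γ t‖
  · -- path stays outside the disk of radius r
    have hb : ∀ t ∈ Icc (0:ℝ) 1, ∀ v : ℂ,
        ‖scD r v‖ ≤ 2 * ‖γ t‖ * ‖v‖ := by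
      intro t ht v
      rw [scD_apply, norm_smul, Real.norm_eq_abs,
        _root_.abs_of_nonneg (by linarith : (0:ℝ) ≤ 2 * r)]
      have := hc t ht
      have hv := norm_nonneg v
      nlinarith
    have := (key_bound γ hγ (fun z => (2 * r) • z) (fun _ => scD r)
      (fun z => sc_hasFDerivAt r z) (scD_cont r) hb le_rfl zero_le_one le_rfl).1
    rw [h0, h1, ← smul_sub, norm_smul, Real.norm_eq_abs,
      _root_.abs_of_nonneg (by linarith : (0:ℝ) ≤ 2 * r)] at this
    exact (min_le_left _ _).trans this
  · push_neg at hc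
    obtain ⟨t0, ht0, hlt⟩ := hc
    have k1 := (key_bound γ hγ (fun z => z.re * z.re + z.im * z.im) nsD ns_hasFDerivAt nsD_cont
      (fun t _ v => nsD_bound (γ t) v) le_rfl ht0.1 ht0.2)
    have k2 := (key_bound γ hγ (fun z => z.re * z.re + z.im * z.im) nsD ns_hasFDerivAt nsD_cont
      (fun t _ v => nsD_bound (γ t) v) ht0.1 ht0.2 le_rfl)
    have hsplit : (∫ t in (0:ℝ)..t0, 2 * ‖γ t‖ * ‖deriv γ t‖)
        + (∫ t in t0..(1:ℝ), 2 * ‖γ t‖ * ‖deriv γ t‖) = LELength γ :=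
      intervalIntegral.integral_add_adjacent_intervals k1.2 k2.2
    have e0 : ∀ z : ℂ, z.re * z.re + z.im * z.im = ‖z‖ ^ 2 := by
      intro z; rw [Complex.sq_norm, Complex.normSq_apply]
    have n1 : ‖A‖ ^ 2 - ‖γ t0‖ ^ 2
        ≤ ∫ t in (0:ℝ)..t0, 2 * ‖γ t‖ * ‖deriv γ t‖ := by
      have := k1.1
      rw [h0] at this
      rw [Real.norm_eq_abs] at this
      calc ‖A‖ ^ 2 - ‖γ t0‖ ^ 2
          ≤ |((γ t0).re * (γ t0).re + (γ t0).im * (γ t0).im) - (A.re * A.re + A.im * A.im)| := by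
            rw [e0, e0]; rw [abs_sub_comm]; exact le_abs_self _
        _ ≤ _ := this
    have n2 : ‖B‖ ^ 2 - ‖γ t0‖ ^ 2
        ≤ ∫ t in t0..(1:ℝ), 2 * ‖γ t‖ * ‖deriv γ t‖ := by
      have := k2.1
      rw [h1] at this
      rw [Real.norm_eq_abs] at this
      calc ‖B‖ ^ 2 - ‖γ t0‖ ^ 2
          ≤ |(B.re * B.re + B.im * B.im) - ((γ t0).re * (γ t0).re + (γ t0).im * (γ t0).im)| := by
            rw [e0, e0]; exact le_abs_self _
        _ ≤ _ := this
    have hr2 : ‖γ t0‖ ^ 2 ≤ r ^ 2 := by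
      have := norm_nonneg (γ t0)
      nlinarith
    refine (min_le_right _ _).trans ?_
    rw [← hsplit]
    linarith

lemma conclude (u : ℕ → ℂ) (w L : ℂ) (hL : L ^ 2 = w)
    (hRpos : 0 < ‖L‖)
    (hw : Filter.Tendsto (fun n => (u n) ^ 2) Filter.atTop (nhds w)) (N1 : ℕ)
    (hnear : ∀ n ≥ N1, ‖u n - L‖ < ‖L‖ / 4) :
    ∀ ε : ℝ, 0 < ε → ∃ N, ∀ n ≥ N, dLE (u n) L < ε := by
  intro ε hε
  set R := ‖L‖ with hR
  obtain ⟨N2, hN2⟩ := Metric.tendsto_atTop.mp hw (ε/5) (by positivity)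
  refine ⟨max N1 N2, fun n hn => ?_⟩
  have h1 : ‖u n - L‖ < R/4 := hnear n (le_trans (le_max_left _ _) hn)
  have h2 : ‖(u n)^2 - w‖ < ε/5 := by
    have := hN2 n (le_trans (le_max_right _ _) hn)
    rwa [Complex.dist_eq] at this
  have h3 : R ≤ ‖u n + L‖ := by
    have t1 : ‖(2:ℂ)*L‖ - ‖u n + L‖ ≤ ‖(2:ℂ)*L - (u n + L)‖ := norm_sub_norm_le _ _
    have e : (2:ℂ)*L - (u n + L) = -(u n - L) := by ring
    rw [e, norm_neg] at t1
    have t2 : ‖(2:ℂ)*L‖ = 2*R := by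
      rw [norm_mul]; simp [hR]
    rw [t2] at t1
    linarith
  have hprod : ‖u n - L‖ * ‖u n + L‖
      = ‖(u n)^2 - w‖ := by
    rw [← norm_mul]; congr 1; rw [← hL]; ring
  have h4 : R * ‖u n - L‖ ≤ ‖(u n)^2 - w‖ := by
    rw [← hprod, mul_comm]
    exact mul_le_mul_of_nonneg_left h3 (norm_nonneg _)
  have h5 : ‖u n‖ ≤ R + R/4 := by
    have := norm_add_le (u n - L) L
    simp only [sub_add_cancel] at this
    linarith
  have h6 := dLE_le (u n) L
  have h7 : ‖L - u n‖ = ‖u n - L‖ := by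
    rw [show L - u n = -(u n - L) by ring, norm_neg]
  rw [h7] at h6
  have hnn := norm_nonneg (u n - L)
  nlinarith [h6, h5, h4, h2, h1, hRpos, hnn]


/-- The log-euclidean plane `(ℂ, dLE)` is complete: every `dLE`-Cauchy sequence
converges with respect to `dLE`. -/
theorem dLE_complete (u : ℕ → ℂ)
    (hu : ∀ ε : ℝ, 0 < ε → ∃ N : ℕ, ∀ m ≥ N, ∀ n ≥ N, dLE (u m) (u n) < ε) :
    ∃ L : ℂ, ∀ ε : ℝ, 0 < ε → ∃ N : ℕ, ∀ n ≥ N, dLE (u n) L < ε := by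
  set v : ℕ → ℂ := fun n => (u n) ^ 2 with hvdef
  have hvC : CauchySeq v := by
    rw [Metric.cauchySeq_iff]
    intro ε hε
    obtain ⟨N, hN⟩ := hu ε hε
    refine ⟨N, fun m hm n hn => ?_⟩
    have hle : dist (v m) (v n) ≤ dLE (u n) (u m) := by
      rw [Complex.dist_eq]
      exact dLE_lower_sq (u n) (u m)
    exact lt_of_le_of_lt hle (hN n hn m hm)
  obtain ⟨w, hw⟩ := cauchySeq_tendsto_of_complete hvC
  by_cases hw0 : w = 0
  · refine ⟨0, fun ε hε => ?_⟩
    rw [hw0] at hw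
    obtain ⟨N, hN⟩ := Metric.tendsto_atTop.mp hw (ε/4) (by positivity)
    refine ⟨N, fun n hn => ?_⟩
    have h1 : ‖v n‖ < ε/4 := by
      have := hN n hn
      rwa [Complex.dist_eq, sub_zero] at this
    have h2 : ‖v n‖ = ‖u n‖ ^ 2 := by
      rw [hvdef]; simp [map_pow]
    have h3 := dLE_le (u n) 0
    simp only [map_zero, norm_zero, add_zero, zero_sub, norm_neg] at h3
    nlinarith [norm_nonneg (u n)]
  · obtain ⟨L0, hL0⟩ := IsAlgClosed.exists_pow_nat_eq w (n := 2) (by norm_num)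
    have hL0ne : L0 ≠ 0 := by
      intro h; apply hw0; rw [← hL0, h]; ring
    set R := ‖L0‖ with hRdef
    have hRpos : 0 < R := norm_pos_iff.mpr hL0ne
    obtain ⟨N1a, hN1a⟩ := Metric.tendsto_atTop.mp hw (R^2/16) (by positivity)
    obtain ⟨N1b, hN1b⟩ := hu (5*R^2/8) (by positivity)
    set N1 := max N1a N1b with hN1def
    have hd : ∀ n ≥ N1, ‖u n - L0‖ < R/4 ∨ ‖u n + L0‖ < R/4 := by
      intro n hn
      have h1 : ‖v n - w‖ < R^2/16 := by
        have := hN1a n (le_trans (le_max_left _ _) hn)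
        rwa [Complex.dist_eq] at this
      by_contra hcon
      push_neg at hcon
      have hprod : ‖u n - L0‖ * ‖u n + L0‖
          = ‖v n - w‖ := by
        rw [← norm_mul]; congr 1; rw [← hL0, hvdef]; ring
      nlinarith [hcon.1, hcon.2, hprod, h1, hRpos]
    have hsep : ∀ m ≥ N1, ∀ n ≥ N1, ‖u m - L0‖ < R/4 →
        ‖u n + L0‖ < R/4 → False := by
      intro m hm n hn h1 h2
      have hlow := dLE_lower_min (u m) (u n) (R/2) (by positivity)
      have hcau := hN1b m (le_trans (le_max_right _ _) hm) n (le_trans (le_max_right _ _) hn)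
      have e1 : 3*R/2 ≤ ‖u n - u m‖ := by
        have t1 : ‖(u m - u n) - 2*L0‖ ≤ ‖u m - L0‖ + ‖u n + L0‖ := by
          rw [show (u m - u n) - 2*L0 = (u m - L0) - (u n + L0) by ring]
          exact norm_sub_le _ _
        have t2 : ‖(2:ℂ)*L0‖ - ‖u m - u n‖ ≤ ‖(2:ℂ)*L0 - (u m - u n)‖ :=
          norm_sub_norm_le _ _
        rw [show (2:ℂ)*L0 - (u m - u n) = -((u m - u n) - 2*L0) by ring, norm_neg] at t2
        have t3 : ‖(2:ℂ)*L0‖ = 2*R := by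
          rw [norm_mul]; simp [hRdef]
        have t4 : ‖u n - u m‖ = ‖u m - u n‖ := by
          rw [show u n - u m = -(u m - u n) by ring, norm_neg]
        rw [t4]
        linarith
      have e2 : 3*R/4 ≤ ‖u m‖ := by
        have := norm_sub_norm_le L0 (u m)
        rw [show L0 - u m = -(u m - L0) by ring, norm_neg] at this
        linarith
      have e3 : 3*R/4 ≤ ‖u n‖ := by
        have := norm_sub_norm_le (-L0) (u n)
        rw [show -L0 - u n = -(u n + L0) by ring, norm_neg, norm_neg] at this
        linarith
      have hmin := lt_of_le_of_lt hlow hcau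
      rcases min_lt_iff.mp hmin with h | h
      · nlinarith
      · nlinarith
    by_cases hfirst : ‖u N1 - L0‖ < R/4
    · refine ⟨L0, conclude u w L0 hL0 hRpos hw N1 ?_⟩
      intro n hn
      rcases hd n hn with h | h
      · exact h
      · exact absurd h (fun h' => hsep N1 le_rfl n hn hfirst h')
    · have hsecond : ‖u N1 + L0‖ < R/4 := (hd N1 le_rfl).resolve_left hfirst
      refine ⟨-L0, conclude u w (-L0) (by rw [← hL0]; ring) (by rw [norm_neg]; exact hRpos) hw N1 ?_⟩
      intro n hn
      have h : ‖u n - L0‖ < R/4 → False :=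
        fun h' => hsep n hn N1 le_rfl h' hsecond
      rcases hd n hn with h' | h'
      · exact absurd h' h
      · simpa [sub_neg_eq_add, norm_neg] using h'
end

section
/- If A, B ∈ ℂ are distinct and Re(A · conj(B)) ≥ 0, then for any geodesic γ from A to B in the log-euclidean plane, the squaring map sends the image of γ onto the euclidean segment from A² to B²: { γ(t)² : t ∈ [0, dLE(A,B)] } = segmentℝ(A², B²). (The geodesic is the lift of a euclidean segment in a chart.) -/
open Complex Set

open MeasureTheory intervalIntegral


lemma piece_bound_s7 {γ : ℝ → ℂ} {a b : ℝ} (hab : a < b)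
    (hγ : ContDiffOn ℝ 1 γ (Set.Icc a b)) :
    IntervalIntegrable (fun t => 2 * ‖γ t‖ * ‖deriv γ t‖)
      MeasureTheory.volume a b ∧
    ‖γ b ^ 2 - γ a ^ 2‖
      ≤ ∫ t in a..b, 2 * ‖γ t‖ * ‖deriv γ t‖ := by
  have huniq : UniqueDiffOn ℝ (Set.Icc a b) := uniqueDiffOn_Icc hab
  set F' : ℝ → ℂ := fun t => 2 * γ t * deriv γ t with hF'def
  -- derivative at interior points
  have hd : ∀ x ∈ Set.Ioo a b, HasDerivAt γ (deriv γ x) x := by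
    intro x hx
    have : DifferentiableAt ℝ γ x :=
      (hγ.differentiableOn one_ne_zero).differentiableAt
        (Icc_mem_nhds hx.1 hx.2)
    exact this.hasDerivAt
  have hdF : ∀ x ∈ Set.Ioo a b, HasDerivAt (fun t => γ t ^ 2) (F' x) x := by
    intro x hx
    have h2 := (hd x hx).mul (hd x hx)
    have hfun : (fun t => γ t ^ 2) = fun t => γ t * γ t := by funext u; ring
    rw [hfun]
    exact h2.congr_deriv (by simp only [hF'def]; ring)
  -- F' is a.e. equal on Ioc to a continuous function
  set G : ℝ → ℂ := fun t => 2 * γ t * derivWithin γ (Set.Icc a b) t with hGdef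
  have hGcont : ContinuousOn G (Set.Icc a b) := by
    exact (continuousOn_const.mul hγ.continuousOn).mul
      (hγ.continuousOn_derivWithin huniq le_rfl)
  have hGint : IntervalIntegrable G MeasureTheory.volume a b := by
    apply ContinuousOn.intervalIntegrable
    rwa [Set.uIcc_of_le hab.le]
  have heq : ∀ x ∈ Set.Ioo a b, F' x = G x := by
    intro x hx
    have : derivWithin γ (Set.Icc a b) x = deriv γ x :=
      derivWithin_of_mem_nhds (Icc_mem_nhds hx.1 hx.2)
    simp [hF'def, hGdef, this]
  have haeIoc : F' =ᵐ[MeasureTheory.volume.restrict (Set.Ioc a b)] G := by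
    rw [← MeasureTheory.Measure.restrict_congr_set (MeasureTheory.Ioo_ae_eq_Ioc)]
    exact (MeasureTheory.ae_restrict_iff' measurableSet_Ioo).2
      (Filter.Eventually.of_forall (fun x hx => heq x hx))
  have hF'int : IntervalIntegrable F' MeasureTheory.volume a b := by
    rw [intervalIntegrable_iff_integrableOn_Ioc_of_le hab.le]
    exact (hGint.def'.mono_set (by rw [Set.uIoc_of_le hab.le])).congr haeIoc.symm
  -- FTC
  have hFTC : ∫ t in a..b, F' t = γ b ^ 2 - γ a ^ 2 := by
    apply integral_eq_sub_of_hasDeriv_right_of_le hab.le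
    · exact hγ.continuousOn.pow 2
    · exact fun x hx => (hdF x hx).hasDerivWithinAt
    · exact hF'int
  have hnorm : ∀ t, ‖F' t‖ = 2 * ‖γ t‖ * ‖deriv γ t‖ := by
    intro t
    simp [hF'def, norm_mul, Complex.norm_two]
  constructor
  · have := hF'int.norm
    simpa [hnorm] using this
  · calc ‖γ b ^ 2 - γ a ^ 2‖ = ‖∫ t in a..b, F' t‖ := by
          rw [hFTC]
    _ ≤ ∫ t in a..b, ‖F' t‖ := norm_integral_le_integral_norm hab.le
    _ = ∫ t in a..b, 2 * ‖γ t‖ * ‖deriv γ t‖ := by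
          simp [hnorm]

lemma LELength_ge {γ : ℝ → ℂ} (h : PiecewiseC1 γ) :
    ‖γ 1 ^ 2 - γ 0 ^ 2‖ ≤ LELength γ := by
  obtain ⟨hc, n, s, hs, h0, h1, hp⟩ := h
  set f : ℝ → ℝ := fun t => 2 * ‖γ t‖ * ‖deriv γ t‖ with hfdef
  set a : ℕ → ℝ := fun k => s ⟨min k n, by omega⟩ with hadef
  have ha0 : a 0 = 0 := by
    have : (⟨min 0 n, by omega⟩ : Fin (n+1)) = 0 := by ext; simp
    simp [hadef, this, h0]
  have han : a n = 1 := by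
    have e : (⟨min n n, by omega⟩ : Fin (n+1)) = Fin.last n := by ext; simp
    calc a n = s (Fin.last n) := congrArg s e
    _ = 1 := h1
  have hpiece : ∀ k, k < n →
      IntervalIntegrable f MeasureTheory.volume (a k) (a (k+1)) ∧
      ‖γ (a (k+1)) ^ 2 - γ (a k) ^ 2‖ ≤ ∫ t in (a k)..(a (k+1)), f t := by
    intro k hk
    have e1 : a k = s (⟨k, by omega⟩ : Fin n).castSucc := by
      simp [hadef, Fin.castSucc]; congr 1; ext; simp; omega
    have e2 : a (k+1) = s (⟨k, by omega⟩ : Fin n).succ := by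
      simp [hadef]; congr 1; ext; simp; omega
    have hlt : a k < a (k+1) := by
      rw [e1, e2]; exact hs (by simp [Fin.lt_def])
    have hcd := hp ⟨k, by omega⟩
    rw [← e1, ← e2] at hcd
    exact piece_bound_s7 hlt hcd
  have hsum : ∑ k ∈ Finset.range n, ∫ t in (a k)..(a (k+1)), f t
      = ∫ t in (a 0)..(a n), f t :=
    sum_integral_adjacent_intervals (fun k hk => (hpiece k hk).1)
  have htel : γ 1 ^ 2 - γ 0 ^ 2
      = ∑ k ∈ Finset.range n, (γ (a (k+1)) ^ 2 - γ (a k) ^ 2) := by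
    rw [Finset.sum_range_sub (fun k => γ (a k) ^ 2) n, ha0, han]
  calc ‖γ 1 ^ 2 - γ 0 ^ 2‖
      = ‖∑ k ∈ Finset.range n, (γ (a (k+1)) ^ 2 - γ (a k) ^ 2)‖ := by rw [← htel]
    _ ≤ ∑ k ∈ Finset.range n, ‖γ (a (k+1)) ^ 2 - γ (a k) ^ 2‖ := by
        exact norm_sum_le (Finset.range n) (fun k => γ (a (k+1)) ^ 2 - γ (a k) ^ 2)
    _ ≤ ∑ k ∈ Finset.range n, ∫ t in (a k)..(a (k+1)), f t :=
        Finset.sum_le_sum (fun k hk => (hpiece k (Finset.mem_range.1 hk)).2)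
    _ = ∫ t in (a 0)..(a n), f t := hsum
    _ = LELength γ := by rw [ha0, han]; rfl

lemma linear_path_pc1 (z w : ℂ) : PiecewiseC1 (fun t : ℝ => z + (t : ℂ) * (w - z)) := by
  have hcd : ContDiff ℝ 1 (fun t : ℝ => z + (t : ℂ) * (w - z)) := by
    apply ContDiff.add contDiff_const
    exact (Complex.ofRealCLM.contDiff.mul contDiff_const)
  refine ⟨hcd.continuous.continuousOn, 1, ![0, 1], ?_, rfl, rfl, ?_⟩
  · intro i j hij
    fin_cases i <;> fin_cases j <;> simp_all <;> norm_num
  · intro i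
    exact hcd.contDiffOn

lemma dLE_lower (z w : ℂ) : ‖w ^ 2 - z ^ 2‖ ≤ dLE z w := by
  apply le_csInf
  · exact ⟨LELength (fun t : ℝ => z + (t : ℂ) * (w - z)),
      (fun t : ℝ => z + (t : ℂ) * (w - z)), linear_path_pc1 z w, by simp, by simp, rfl⟩
  · rintro L ⟨γ, hγ, h0, h1, rfl⟩
    have := LELength_ge hγ
    rwa [h0, h1] at this


lemma hasDerivAt_comp_real {f : ℝ → ℂ} {g : ℂ → ℂ} {f' g' : ℂ} {t : ℝ}
    (hf : HasDerivAt f f' t) (hg : HasDerivAt g g' (f t)) :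
    HasDerivAt (fun x => g (f x)) (g' * f') t := by
  simpa [smul_eq_mul, mul_comm, Function.comp_def] using
    (hg.hasFDerivAt.restrictScalars ℝ).comp_hasDerivAt t hf

lemma contDiffAt_cpow_half {x : ℂ} (hx : 0 < x.re) :
    ContDiffAt ℝ 1 (fun z : ℂ => z ^ (1/2 : ℂ)) x := by
  have hslit : x ∈ Complex.slitPlane := Or.inl hx
  have hx0 : x ≠ 0 := Complex.slitPlane_ne_zero hslit
  have h1 : ContDiffAt ℂ 1 (fun z : ℂ => Complex.exp (Complex.log z * (1/2 : ℂ))) x :=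
    Complex.contDiff_exp.contDiffAt.comp x
      ((Complex.contDiffAt_log hslit).mul contDiffAt_const)
  have h2 : ContDiffAt ℂ 1 (fun z : ℂ => z ^ (1/2 : ℂ)) x := by
    apply h1.congr_of_eventuallyEq
    filter_upwards [isOpen_ne.eventually_mem (show x ∈ {z : ℂ | z ≠ 0} from hx0)] with z hz
    exact Complex.cpow_def_of_ne_zero hz _
  exact h2.restrict_scalars ℝ

lemma dLE_nonneg_mem {A B : ℂ} {L : ℝ}
    (hL : L ∈ {L : ℝ | ∃ γ : ℝ → ℂ, PiecewiseC1 γ ∧ γ 0 = A ∧ γ 1 = B ∧ LELength γ = L}) :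
    (0:ℝ) ≤ L := by
  obtain ⟨γ, _, _, _, rfl⟩ := hL
  apply intervalIntegral.integral_nonneg (by norm_num)
  intro t _
  positivity

lemma dLE_le_of_mem {A B : ℂ} {γ : ℝ → ℂ} (h1 : PiecewiseC1 γ) (h2 : γ 0 = A)
    (h3 : γ 1 = B) : dLE A B ≤ LELength γ :=
  csInf_le ⟨0, fun _ hL => dLE_nonneg_mem hL⟩ ⟨γ, h1, h2, h3, rfl⟩

lemma strictMono_two {a b : ℝ} (hab : a < b) : StrictMono (![a, b] : Fin 2 → ℝ) := by
  intro i j hij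
  fin_cases i <;> fin_cases j <;> simp_all

lemma pc1_of_contDiffOn {γ : ℝ → ℂ} (h : ContDiffOn ℝ 1 γ (Set.Icc 0 1)) :
    PiecewiseC1 γ := by
  refine ⟨h.continuousOn, 1, ![0, 1], strictMono_two one_pos, rfl, rfl, ?_⟩
  intro i
  have : i = 0 := Subsingleton.elim i 0
  subst this
  simpa using h

lemma dLE_le_of_pos {A B : ℂ} (hre : 0 < (A * (starRingEnd ℂ) B).re) :
    dLE A B ≤ ‖B ^ 2 - A ^ 2‖ := by
  have hA : A ≠ 0 := by rintro rfl; simp at hre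
  have hB : B ≠ 0 := by rintro rfl; simp at hre
  have hre' : 0 < A.re * B.re + A.im * B.im := by
    simpa [Complex.mul_re, Complex.conj_re, Complex.conj_im, sub_neg_eq_add] using hre
  have hnsA : 0 < Complex.normSq A := Complex.normSq_pos.2 hA
  have hnsB : 0 < Complex.normSq B := Complex.normSq_pos.2 hB
  have hABre : 0 < (A / B).re := by
    rw [Complex.div_re, ← add_div]
    exact div_pos hre' hnsB
  have hBAre : 0 < (B / A).re := by
    rw [Complex.div_re, ← add_div]
    apply div_pos _ hnsA
    nlinarith
  -- the lifted path
  set f : ℝ → ℂ := fun t => (A ^ 2 + (t : ℂ) * (B ^ 2 - A ^ 2)) / (A * B) with hfdef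
  set q : ℂ := (A / B) ^ (1/2 : ℂ) with hqdef
  set d : ℂ := A / q with hddef
  set w : ℝ → ℂ := fun t => d * (f t) ^ (1/2 : ℂ) with hwdef
  have hABne : A / B ≠ 0 := div_ne_zero hA hB
  have hq2 : q * q = A / B := by
    rw [hqdef, ← Complex.cpow_add _ _ hABne]
    norm_num
  have hq0 : q ≠ 0 := by
    intro h
    rw [h, mul_zero] at hq2
    exact hABne hq2.symm
  have hd2 : d * d = A * B := by
    rw [hddef, div_mul_div_comm, hq2]
    field_simp
  -- positivity of the real part along the path
  have hrepr : ∀ t : ℝ, f t = ((1 - t : ℝ) : ℂ) * (A / B) + ((t : ℝ) : ℂ) * (B / A) := by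
    intro t
    rw [hfdef]
    push_cast
    field_simp
    ring
  have hfre : ∀ t ∈ Set.Icc (0:ℝ) 1, 0 < (f t).re := by
    intro t ht
    have hrt : (f t).re = (1 - t) * (A / B).re + t * (B / A).re := by
      rw [hrepr t]
      simp [Complex.add_re, Complex.re_ofReal_mul]
    rw [hrt]
    have h1 : (0:ℝ) ≤ 1 - t := by linarith [ht.2]
    have hmin : 0 < min ((A/B).re) ((B/A).re) := lt_min hABre hBAre
    nlinarith [mul_nonneg h1 (by simp [le_refl, min_le_left] : (0:ℝ) ≤ (A/B).re - min ((A/B).re) ((B/A).re)),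
      mul_nonneg ht.1 (by simp [min_le_right] : (0:ℝ) ≤ (B/A).re - min ((A/B).re) ((B/A).re))]
  have hslit : ∀ t ∈ Set.Icc (0:ℝ) 1, f t ∈ Complex.slitPlane := fun t ht => Or.inl (hfre t ht)
  have hfne : ∀ t ∈ Set.Icc (0:ℝ) 1, f t ≠ 0 := fun t ht =>
    Complex.slitPlane_ne_zero (hslit t ht)
  -- endpoints
  have hf0 : f 0 = A / B := by
    rw [hfdef]
    simp only [Complex.ofReal_zero, zero_mul, add_zero]
    rw [pow_two]
    rw [mul_comm A B, mul_div_mul_right _ _ hA]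
  have hf1 : f 1 = B / A := by
    rw [hfdef]
    simp only [Complex.ofReal_one, one_mul]
    field_simp
    ring
  have hw0 : w 0 = A := by
    rw [hwdef]
    simp only [hf0, ← hqdef, hddef]
    field_simp
  have harg : (A / B).arg ≠ Real.pi := by
    intro h
    have := Complex.arg_eq_pi_iff.1 h
    linarith [this.1]
  have hBAq : (B / A) ^ (1/2 : ℂ) = q⁻¹ := by
    have e : B / A = (A / B)⁻¹ := (inv_div _ _).symm
    rw [e, Complex.inv_cpow _ _ harg, hqdef]
  have hw1 : w 1 = B := by
    rw [hwdef]
    simp only [hf1, hBAq, hddef]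
    rw [← div_eq_mul_inv, div_div, hq2, div_div_eq_mul_div, mul_comm, mul_div_assoc,
      div_self hA, mul_one]
  -- smoothness
  have hfcd : ContDiff ℝ 1 f := by
    rw [hfdef]
    apply ContDiff.div_const
    exact contDiff_const.add (Complex.ofRealCLM.contDiff.mul contDiff_const)
  have hwcd : ContDiffOn ℝ 1 w (Set.Icc 0 1) := by
    intro t ht
    exact contDiffWithinAt_const.mul
      (((contDiffAt_cpow_half (hfre t ht)).comp t hfcd.contDiffAt)).contDiffWithinAt
  -- derivative
  have hfd : ∀ t : ℝ, HasDerivAt f ((B ^ 2 - A ^ 2) / (A * B)) t := by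
    intro t
    have h1 : HasDerivAt (fun u : ℝ => (u : ℂ)) 1 t := by
      simpa using (hasDerivAt_id t).ofReal_comp
    have h2 := ((h1.mul_const (B ^ 2 - A ^ 2)).const_add (A ^ 2)).div_const (A * B)
    simpa [hfdef] using h2
  have hwd : ∀ t ∈ Set.Icc (0:ℝ) 1, HasDerivAt w
      (d * ((1/2 : ℂ) * (f t) ^ ((1/2 : ℂ) - 1) * ((B ^ 2 - A ^ 2) / (A * B)))) t := by
    intro t ht
    have hcp := (Complex.hasStrictDerivAt_cpow_const (c := (1/2 : ℂ))
      (hslit t ht)).hasDerivAt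
    have h3 := HasDerivAt.const_mul d (hasDerivAt_comp_real (hfd t) hcp)
    simpa [hwdef, mul_assoc] using h3
  -- the integrand is constant
  have habsd : ‖d‖ * ‖d‖ = ‖A * B‖ := by
    rw [← norm_mul, hd2]
  have hABabs : 0 < ‖A * B‖ := norm_pos_iff.2 (mul_ne_zero hA hB)
  have hconst : ∀ t ∈ Set.Icc (0:ℝ) 1,
      2 * ‖w t‖ * ‖deriv w t‖ = ‖B ^ 2 - A ^ 2‖ := by
    intro t ht
    rw [(hwd t ht).deriv]
    set r : ℝ := ‖f t‖ with hrdef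
    have hrpos : 0 < r := norm_pos_iff.2 (hfne t ht)
    have e1 : ‖(f t) ^ (1/2 : ℂ)‖ = r ^ ((1:ℝ)/2) := by
      rw [Complex.norm_cpow_of_ne_zero (hfne t ht)]
      norm_num
      rfl
    have e2 : ‖(f t) ^ ((1/2 : ℂ) - 1)‖ = r ^ (-((1:ℝ)/2)) := by
      rw [Complex.norm_cpow_of_ne_zero (hfne t ht)]
      norm_num
      rfl
    have hwabs : ‖w t‖ = ‖d‖ * r ^ ((1:ℝ)/2) := by
      rw [hwdef]
      show ‖d * (f t) ^ (1/2 : ℂ)‖ = _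
      rw [norm_mul, e1]
    have habs_half : ‖(1:ℂ)/2‖ = 1/2 := by
      rw [norm_div, norm_one, Complex.norm_two]
    have e3 : ‖d * ((1/2 : ℂ) * (f t) ^ ((1/2 : ℂ) - 1) * ((B ^ 2 - A ^ 2) / (A * B)))‖
        = ‖d‖ * ((1/2) * r ^ (-((1:ℝ)/2)) * (‖B ^ 2 - A ^ 2‖ / ‖A * B‖)) := by
      rw [norm_mul, norm_mul, norm_mul, e2, habs_half,
        norm_div (B ^ 2 - A ^ 2) (A * B)]
    rw [hwabs, e3]
    have hr1 : r ^ ((1:ℝ)/2) * r ^ (-((1:ℝ)/2)) = 1 := by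
      rw [← Real.rpow_add hrpos]
      norm_num
    calc 2 * (‖d‖ * r ^ ((1:ℝ)/2)) *
          (‖d‖ * ((1/2) * r ^ (-((1:ℝ)/2)) * (‖B ^ 2 - A ^ 2‖ / ‖A * B‖)))
        = (‖d‖ * ‖d‖) * (r ^ ((1:ℝ)/2) * r ^ (-((1:ℝ)/2)))
            * (‖B ^ 2 - A ^ 2‖ / ‖A * B‖) := by ring
      _ = ‖A * B‖ * 1 * (‖B ^ 2 - A ^ 2‖ / ‖A * B‖) := by
          rw [habsd, hr1]
      _ = ‖B ^ 2 - A ^ 2‖ := by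
          rw [mul_one, mul_comm, div_mul_cancel₀ _ hABabs.ne']
  -- conclude
  have hlen : LELength w = ‖B ^ 2 - A ^ 2‖ := by
    rw [LELength]
    rw [intervalIntegral.integral_congr (g := fun _ => ‖B ^ 2 - A ^ 2‖)
      (by rw [Set.uIcc_of_le (by norm_num : (0:ℝ) ≤ 1)]; exact fun t ht => hconst t ht)]
    simp
  calc dLE A B ≤ LELength w := dLE_le_of_mem (pc1_of_contDiffOn hwcd) hw0 hw1
  _ = _ := hlen

lemma dLE_le_zero_left (B : ℂ) : dLE 0 B ≤ ‖B‖ ^ 2 := by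
  set w : ℝ → ℂ := fun t => (t : ℂ) * B with hwdef
  have hcd : ContDiff ℝ 1 w := Complex.ofRealCLM.contDiff.mul contDiff_const
  have hder : ∀ t : ℝ, HasDerivAt w B t := by
    intro t
    simpa using (Complex.ofRealCLM.hasDerivAt (x := t)).mul_const B
  have hlen : LELength w = ‖B‖ ^ 2 := by
    rw [LELength, intervalIntegral.integral_congr
      (g := fun t => (2 * ‖B‖ ^ 2) * t) ?_]
    · rw [intervalIntegral.integral_const_mul]
      simp [integral_id]
      ring
    · intro t ht
      rw [Set.uIcc_of_le (by norm_num : (0:ℝ) ≤ 1)] at ht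
      show 2 * ‖w t‖ * ‖deriv w t‖ = 2 * ‖B‖ ^ 2 * t
      rw [(hder t).deriv]
      simp only [hwdef]
      rw [norm_mul, Complex.norm_real, Real.norm_eq_abs, _root_.abs_of_nonneg ht.1]
      ring
  calc dLE 0 B ≤ LELength w :=
        dLE_le_of_mem (pc1_of_contDiffOn hcd.contDiffOn) (by simp [hwdef]) (by simp [hwdef])
  _ = _ := hlen

lemma dLE_le_zero_right (A : ℂ) : dLE A 0 ≤ ‖A‖ ^ 2 := by
  set w : ℝ → ℂ := fun t => ((1 - t : ℝ) : ℂ) * A with hwdef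
  have hcd : ContDiff ℝ 1 w := by
    apply ContDiff.mul _ contDiff_const
    exact Complex.ofRealCLM.contDiff.comp (contDiff_const.sub contDiff_id)
  have hder : ∀ t : ℝ, HasDerivAt w (-A) t := by
    intro t
    have h1 : HasDerivAt (fun u : ℝ => (1 - u : ℝ)) (-1) t := by
      simpa using (hasDerivAt_id t).const_sub 1
    have := (h1.ofReal_comp).mul_const A
    exact this.congr_deriv (by push_cast; ring)
  have hlen : LELength w = ‖A‖ ^ 2 := by
    rw [LELength, intervalIntegral.integral_congr
      (g := fun t => (2 * ‖A‖ ^ 2) * (1 - t)) ?_]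
    · rw [intervalIntegral.integral_const_mul,
        intervalIntegral.integral_sub intervalIntegrable_const intervalIntegral.intervalIntegrable_id]
      simp [integral_id]
      ring
    · intro t ht
      rw [Set.uIcc_of_le (by norm_num : (0:ℝ) ≤ 1)] at ht
      show 2 * ‖w t‖ * ‖deriv w t‖ = 2 * ‖A‖ ^ 2 * (1 - t)
      rw [(hder t).deriv]
      simp only [hwdef]
      rw [norm_neg, norm_mul, Complex.norm_real, Real.norm_eq_abs, _root_.abs_of_nonneg (by linarith [ht.2] : (0:ℝ) ≤ 1 - t)]
      ring
  calc dLE A 0 ≤ LELength w :=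
        dLE_le_of_mem (pc1_of_contDiffOn hcd.contDiffOn) (by simp [hwdef]) (by simp [hwdef])
  _ = _ := hlen

lemma ae_ne_vol (c : ℝ) : ∀ᵐ (x : ℝ) ∂MeasureTheory.volume, x ≠ c := by
  rw [MeasureTheory.ae_iff]
  simp only [ne_eq, not_not, Set.setOf_eq_eq_singleton]
  exact MeasureTheory.measure_singleton c

lemma dLE_le_of_perp {A B : ℂ} (hA : A ≠ 0) (hB : B ≠ 0)
    (hre : (A * (starRingEnd ℂ) B).re = 0) :
    dLE A B ≤ ‖B ^ 2 - A ^ 2‖ := by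
  have hnsA : 0 < Complex.normSq A := Complex.normSq_pos.2 hA
  have hnsB : 0 < Complex.normSq B := Complex.normSq_pos.2 hB
  -- key algebraic identity
  have h1 : A * (starRingEnd ℂ) B + (starRingEnd ℂ) A * B
      = ((2 * (A * (starRingEnd ℂ) B).re : ℝ) : ℂ) := by
    have h := Complex.add_conj (A * (starRingEnd ℂ) B)
    rw [map_mul, Complex.conj_conj] at h
    exact h
  have hkey : A ^ 2 * (Complex.normSq B : ℂ) + B ^ 2 * (Complex.normSq A : ℂ) = 0 := by
    calc A ^ 2 * (Complex.normSq B : ℂ) + B ^ 2 * (Complex.normSq A : ℂ)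
        = A * B * (A * (starRingEnd ℂ) B + (starRingEnd ℂ) A * B) := by
          rw [← Complex.mul_conj B, ← Complex.mul_conj A]; ring
      _ = 0 := by rw [h1, hre]; simp
  -- |B² - A²| = |A|² + |B|²
  have habs : ‖B ^ 2 - A ^ 2‖ = ‖A‖ ^ 2 + ‖B‖ ^ 2 := by
    have h2 : (B ^ 2 - A ^ 2) * (Complex.normSq B : ℂ)
        = B ^ 2 * ((Complex.normSq A + Complex.normSq B : ℝ) : ℂ) := by
      push_cast
      linear_combination -hkey
    have h3 := congrArg (‖·‖) h2
    rw [norm_mul, norm_mul, Complex.norm_real, Real.norm_eq_abs, Complex.norm_real, Real.norm_eq_abs,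
      _root_.abs_of_nonneg (Complex.normSq_nonneg B),
      _root_.abs_of_nonneg (by positivity : (0:ℝ) ≤ Complex.normSq A + Complex.normSq B),
      norm_pow] at h3
    have h4 : ‖B ^ 2 - A ^ 2‖ * Complex.normSq B
        = (Complex.normSq A + Complex.normSq B) * Complex.normSq B := by
      rw [h3, Complex.sq_norm]
      ring
    have := mul_right_cancel₀ hnsB.ne' h4
    rw [this, ← Complex.sq_norm, ← Complex.sq_norm]
  -- the broken path
  set t₀ : ℝ := Complex.normSq A / (Complex.normSq A + Complex.normSq B) with ht₀def
  have ht₀pos : 0 < t₀ := by positivity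
  have ht₀lt : t₀ < 1 := by
    rw [ht₀def, div_lt_one (by positivity)]
    linarith
  have h1t₀ : 0 < 1 - t₀ := by linarith
  set f₁ : ℝ → ℂ := fun t => (((t₀ - t) / t₀ : ℝ) : ℂ) * A with hf₁def
  set f₂ : ℝ → ℂ := fun t => (((t - t₀) / (1 - t₀) : ℝ) : ℂ) * B with hf₂def
  set w : ℝ → ℂ := fun t => if t ≤ t₀ then f₁ t else f₂ t with hwdef
  have hf₁cd : ContDiff ℝ 1 f₁ :=
    (Complex.ofRealCLM.contDiff.comp ((contDiff_const.sub contDiff_id).div_const t₀)).mul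
      contDiff_const
  have hf₂cd : ContDiff ℝ 1 f₂ :=
    (Complex.ofRealCLM.contDiff.comp ((contDiff_id.sub contDiff_const).div_const (1 - t₀))).mul
      contDiff_const
  have hjun : f₁ t₀ = f₂ t₀ := by
    simp [hf₁def, hf₂def]
  have hcont : Continuous w := by
    rw [hwdef]
    apply Continuous.if_le hf₁cd.continuous hf₂cd.continuous continuous_id continuous_const
    intro x hx
    simp only [id] at hx
    rw [hx]
    exact hjun
  have hw_eq₁ : ∀ x ≤ t₀, w x = f₁ x := fun x hx => if_pos hx
  have hw_eq₂ : ∀ x, t₀ ≤ x → w x = f₂ x := by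
    intro x hx
    rcases eq_or_lt_of_le hx with h | h
    · have : w x = f₁ x := if_pos (le_of_eq h.symm)
      rw [this, ← h]
      exact hjun
    · exact if_neg (not_le.2 h)
  -- piecewise C¹ structure
  have hsm : StrictMono (![0, t₀, 1] : Fin 3 → ℝ) := by
    rw [Fin.strictMono_iff_lt_succ]
    intro i
    fin_cases i
    · exact ht₀pos
    · exact ht₀lt
  have hpc : PiecewiseC1 w := by
    refine ⟨hcont.continuousOn, 2, ![0, t₀, 1], hsm, rfl, rfl, ?_⟩
    intro i
    fin_cases i
    · exact ContDiffOn.congr hf₁cd.contDiffOn (fun x hx => hw_eq₁ x hx.2)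
    · exact ContDiffOn.congr hf₂cd.contDiffOn (fun x hx => hw_eq₂ x hx.1)
  -- endpoints
  have hw0 : w 0 = A := by
    rw [hw_eq₁ 0 ht₀pos.le, hf₁def]
    simp only [sub_zero]
    rw [div_self ht₀pos.ne']
    simp
  have hw1 : w 1 = B := by
    rw [hw_eq₂ 1 ht₀lt.le, hf₂def]
    simp only []
    rw [div_self h1t₀.ne']
    simp
  -- derivatives on the open pieces
  have hder₁ : ∀ x, x < t₀ → deriv w x = -(A / ((t₀ : ℝ) : ℂ)) := by
    intro x hx
    have hev : w =ᶠ[nhds x] f₁ := by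
      filter_upwards [Iio_mem_nhds hx] with y hy
      exact hw_eq₁ y (le_of_lt hy)
    rw [Filter.EventuallyEq.deriv_eq hev]
    have hr : HasDerivAt (fun t : ℝ => (t₀ - t) / t₀) (-1 / t₀) x :=
      ((hasDerivAt_id x).const_sub t₀).div_const t₀
    have hd := (hr.ofReal_comp).mul_const A
    rw [hf₁def, hd.deriv]
    push_cast
    ring
  have hder₂ : ∀ x, t₀ < x → deriv w x = B / ((1 - t₀ : ℝ) : ℂ) := by
    intro x hx
    have hev : w =ᶠ[nhds x] f₂ := by
      filter_upwards [Ioi_mem_nhds hx] with y hy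
      exact hw_eq₂ y (le_of_lt hy)
    rw [Filter.EventuallyEq.deriv_eq hev]
    have hr : HasDerivAt (fun t : ℝ => (t - t₀) / (1 - t₀)) (1 / (1 - t₀)) x :=
      ((hasDerivAt_id x).sub_const t₀).div_const (1 - t₀)
    have hd := (hr.ofReal_comp).mul_const B
    rw [hf₂def, hd.deriv]
    push_cast
    ring
  -- integrand formulas on the pieces
  set F : ℝ → ℝ := fun t => 2 * ‖w t‖ * ‖deriv w t‖ with hFdef
  set g₁ : ℝ → ℝ := fun t => (2 * ‖A‖ ^ 2 / t₀ ^ 2) * (t₀ - t) with hg₁def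
  set g₂ : ℝ → ℝ := fun t => (2 * ‖B‖ ^ 2 / (1 - t₀) ^ 2) * (t - t₀) with hg₂def
  have hFeq₁ : ∀ x, 0 ≤ x → x < t₀ → F x = g₁ x := by
    intro x hx0 hx
    rw [hFdef]
    show 2 * ‖w x‖ * ‖deriv w x‖ = g₁ x
    rw [hder₁ x hx, hw_eq₁ x hx.le, hf₁def]
    show 2 * ‖(((t₀ - x) / t₀ : ℝ) : ℂ) * A‖ * ‖-(A / ((t₀:ℝ):ℂ))‖ = g₁ x
    rw [norm_mul, Complex.norm_real, Real.norm_eq_abs, norm_neg, norm_div, Complex.norm_real, Real.norm_eq_abs,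
      _root_.abs_of_nonneg (div_nonneg (by linarith) ht₀pos.le),
      _root_.abs_of_nonneg ht₀pos.le, hg₁def]
    have h2 : (0:ℝ) < t₀ := ht₀pos
    field_simp
  have hFeq₂ : ∀ x, t₀ < x → x ≤ 1 → F x = g₂ x := by
    intro x hx hx1
    rw [hFdef]
    show 2 * ‖w x‖ * ‖deriv w x‖ = g₂ x
    rw [hder₂ x hx, hw_eq₂ x hx.le, hf₂def]
    show 2 * ‖(((x - t₀) / (1 - t₀) : ℝ) : ℂ) * B‖ * ‖B / (((1 - t₀:ℝ)):ℂ)‖ = g₂ x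
    rw [norm_mul, Complex.norm_real, Real.norm_eq_abs, norm_div, Complex.norm_real, Real.norm_eq_abs,
      _root_.abs_of_nonneg (div_nonneg (by linarith) h1t₀.le),
      _root_.abs_of_nonneg h1t₀.le, hg₂def]
    field_simp
  -- integrability on the pieces
  have hg₁cont : Continuous g₁ := by
    rw [hg₁def]
    exact continuous_const.mul (continuous_const.sub continuous_id)
  have hg₂cont : Continuous g₂ := by
    rw [hg₂def]
    exact continuous_const.mul (continuous_id.sub continuous_const)
  have hint₁ : IntervalIntegrable F MeasureTheory.volume 0 t₀ := by
    rw [intervalIntegrable_iff_integrableOn_Ioc_of_le ht₀pos.le]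
    apply MeasureTheory.Integrable.congr (hg₁cont.integrableOn_Ioc)
    apply (MeasureTheory.ae_restrict_iff' measurableSet_Ioc).2
    filter_upwards [ae_ne_vol t₀] with x hx hxm
    exact (hFeq₁ x hxm.1.le (lt_of_le_of_ne hxm.2 hx)).symm
  have hint₂ : IntervalIntegrable F MeasureTheory.volume t₀ 1 := by
    rw [intervalIntegrable_iff_integrableOn_Ioc_of_le ht₀lt.le]
    apply MeasureTheory.Integrable.congr (hg₂cont.integrableOn_Ioc)
    apply (MeasureTheory.ae_restrict_iff' measurableSet_Ioc).2
    apply Filter.Eventually.of_forall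
    intro x hxm
    exact (hFeq₂ x hxm.1 hxm.2).symm
  -- the two integrals
  have hsub₁ : ∫ t in (0:ℝ)..t₀, (t₀ - t) = t₀ ^ 2 / 2 := by
    rw [intervalIntegral.integral_sub intervalIntegrable_const
      intervalIntegral.intervalIntegrable_id]
    simp [integral_id]
    ring
  have hsub₂ : ∫ t in t₀..1, (t - t₀) = (1 - t₀) ^ 2 / 2 := by
    rw [intervalIntegral.integral_sub intervalIntegral.intervalIntegrable_id
      intervalIntegrable_const]
    simp [integral_id]
    ring
  have hI₁ : ∫ t in (0:ℝ)..t₀, F t = ‖A‖ ^ 2 := by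
    rw [intervalIntegral.integral_congr_ae (g := g₁) ?_]
    · rw [hg₁def]
      show ∫ t in (0:ℝ)..t₀, (2 * ‖A‖ ^ 2 / t₀ ^ 2) * (t₀ - t) = _
      rw [intervalIntegral.integral_const_mul, hsub₁]
      field_simp
    · filter_upwards [ae_ne_vol t₀] with x hx hxm
      rw [Set.uIoc_of_le ht₀pos.le] at hxm
      exact hFeq₁ x hxm.1.le (lt_of_le_of_ne hxm.2 hx)
  have hI₂ : ∫ t in t₀..(1:ℝ), F t = ‖B‖ ^ 2 := by
    rw [intervalIntegral.integral_congr_ae (g := g₂) ?_]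
    · rw [hg₂def]
      show ∫ t in t₀..(1:ℝ), (2 * ‖B‖ ^ 2 / (1 - t₀) ^ 2) * (t - t₀) = _
      rw [intervalIntegral.integral_const_mul, hsub₂]
      field_simp
    · apply Filter.Eventually.of_forall
      intro x hxm
      rw [Set.uIoc_of_le ht₀lt.le] at hxm
      exact hFeq₂ x hxm.1 hxm.2
  have hlen : LELength w = ‖A‖ ^ 2 + ‖B‖ ^ 2 := by
    have hsplit := intervalIntegral.integral_add_adjacent_intervals hint₁ hint₂
    rw [LELength]
    show ∫ t in (0:ℝ)..1, F t = _
    rw [← hsplit, hI₁, hI₂]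
  calc dLE A B ≤ LELength w := dLE_le_of_mem hpc hw0 hw1
  _ = _ := by rw [hlen, habs]


lemma dLE_le_main {A B : ℂ} (h : 0 ≤ (A * (starRingEnd ℂ) B).re) :
    dLE A B ≤ ‖B ^ 2 - A ^ 2‖ := by
  rcases lt_or_eq_of_le h with hpos | heq
  · exact dLE_le_of_pos hpos
  · by_cases hA : A = 0
    · subst hA
      calc dLE 0 B ≤ ‖B‖ ^ 2 := dLE_le_zero_left B
      _ = ‖B ^ 2 - 0 ^ 2‖ := by
          rw [show ((0:ℂ) ^ 2) = 0 by norm_num, sub_zero, norm_pow]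
    · by_cases hB : B = 0
      · subst hB
        calc dLE A 0 ≤ ‖A‖ ^ 2 := dLE_le_zero_right A
        _ = ‖0 ^ 2 - A ^ 2‖ := by
            rw [show ((0:ℂ) ^ 2) = 0 by norm_num, zero_sub, norm_neg, norm_pow]
      · exact dLE_le_of_perp hA hB heq.symm

/-- If `Re(A·conj B) ≥ 0` and `A ≠ B`, the squaring map sends the image of the
geodesic from `A` to `B` onto the euclidean segment from `A²` to `B²`. -/
theorem sq_image_geodesic_eq_segment (A B : ℂ) (hAB : A ≠ B)
    (h : 0 ≤ (A * (starRingEnd ℂ) B).re) (γ : ℝ → ℂ) (hγ : IsLEGeodesic A B γ) :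
    (fun t => (γ t) ^ 2) '' Set.Icc (0:ℝ) (dLE A B) = segment ℝ (A ^ 2) (B ^ 2) := by
  obtain ⟨hγ0, hγD, hgeo⟩ := hγ
  set D := dLE A B with hDdef
  have hA2B2 : A ^ 2 ≠ B ^ 2 := by
    intro he
    have hz : (A - B) * (A + B) = 0 := by linear_combination he
    rcases mul_eq_zero.1 hz with h1 | h1
    · exact hAB (sub_eq_zero.1 h1)
    · have hBA : B = -A := by linear_combination h1
      rw [hBA, map_neg, mul_neg, Complex.neg_re, Complex.mul_conj] at h
      have hnsA : Complex.normSq A ≤ 0 := by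
        simpa using neg_nonneg.1 (by simpa using h)
      have hA0 : A = 0 := Complex.normSq_eq_zero.1
        (le_antisymm hnsA (Complex.normSq_nonneg A))
      apply hAB
      rw [hA0, hBA, hA0, neg_zero]
  have hDeq : D = ‖B ^ 2 - A ^ 2‖ :=
    le_antisymm (dLE_le_main h) (dLE_lower A B)
  have hDpos : 0 < D := by
    rw [hDeq]
    exact norm_pos_iff.2 (sub_ne_zero.2 (Ne.symm hA2B2))
  have hdist : ∀ t ∈ Set.Icc (0:ℝ) D, ‖(γ t) ^ 2 - A ^ 2‖ = t
      ∧ ‖B ^ 2 - (γ t) ^ 2‖ = D - t := by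
    intro t ht
    have e1 : dLE A (γ t) = t := by
      have := hgeo 0 (Set.left_mem_Icc.2 hDpos.le) t ht
      rw [hγ0] at this
      rw [this, abs_sub_comm, sub_zero, _root_.abs_of_nonneg ht.1]
    have e2 : dLE (γ t) B = D - t := by
      have := hgeo t ht D (Set.right_mem_Icc.2 hDpos.le)
      rw [hγD] at this
      rw [this, abs_sub_comm, _root_.abs_of_nonneg (by linarith [ht.2] : (0:ℝ) ≤ D - t)]
    have l1 : ‖(γ t) ^ 2 - A ^ 2‖ ≤ t := by
      have := dLE_lower A (γ t)
      rwa [e1] at this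
    have l2 : ‖B ^ 2 - (γ t) ^ 2‖ ≤ D - t := by
      have := dLE_lower (γ t) B
      rwa [e2] at this
    have l3 : ‖B ^ 2 - A ^ 2‖
        ≤ ‖(γ t) ^ 2 - A ^ 2‖ + ‖B ^ 2 - (γ t) ^ 2‖ := by
      calc ‖B ^ 2 - A ^ 2‖
          = ‖((γ t) ^ 2 - A ^ 2) + (B ^ 2 - (γ t) ^ 2)‖ := by ring_nf
        _ ≤ _ := norm_add_le _ _
    rw [← hDeq] at l3
    constructor <;> linarith
  have hpoint : ∀ t ∈ Set.Icc (0:ℝ) D,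
      (γ t) ^ 2 = A ^ 2 + ((t / D : ℝ) : ℂ) * (B ^ 2 - A ^ 2) := by
    intro t ht
    obtain ⟨e1, e2⟩ := hdist t ht
    have hsum : dist (A ^ 2) ((γ t) ^ 2) + dist ((γ t) ^ 2) (B ^ 2)
        = dist (A ^ 2) (B ^ 2) := by
      rw [Complex.dist_eq, Complex.dist_eq, Complex.dist_eq,
        norm_sub_rev (A ^ 2) ((γ t) ^ 2), e1,
        norm_sub_rev ((γ t) ^ 2) (B ^ 2), e2,
        norm_sub_rev (A ^ 2) (B ^ 2), ← hDeq]
      ring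
    have hw : Wbtw ℝ (A ^ 2) ((γ t) ^ 2) (B ^ 2) := dist_add_dist_eq_iff.1 hsum
    have hseg : (γ t) ^ 2 ∈ segment ℝ (A ^ 2) (B ^ 2) := mem_segment_iff_wbtw.2 hw
    obtain ⟨a, b, ha, hb, hab, hx⟩ := hseg
    have hxb : (γ t) ^ 2 - A ^ 2 = (b : ℂ) * (B ^ 2 - A ^ 2) := by
      rw [← hx]
      have haeq : a = 1 - b := by linarith
      rw [haeq]
      simp only [Complex.real_smul]
      push_cast
      ring
    have habs2 : t = b * D := by
      rw [← e1, hxb, norm_mul, Complex.norm_real, Real.norm_eq_abs, _root_.abs_of_nonneg hb, hDeq]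
    have hbeq : b = t / D := by
      rw [habs2, mul_div_assoc, div_self hDpos.ne', mul_one]
    calc (γ t) ^ 2 = A ^ 2 + ((γ t) ^ 2 - A ^ 2) := by ring
      _ = A ^ 2 + ((t / D : ℝ) : ℂ) * (B ^ 2 - A ^ 2) := by rw [hxb, ← hbeq]
  rw [segment_eq_image' ℝ (A ^ 2) (B ^ 2)]
  ext z
  simp only [Set.mem_image]
  constructor
  · rintro ⟨t, ht, rfl⟩
    refine ⟨t / D, ⟨div_nonneg ht.1 hDpos.le, (div_le_one hDpos).2 ht.2⟩, ?_⟩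
    rw [hpoint t ht, Complex.real_smul]
  · rintro ⟨θ, hθ, rfl⟩
    refine ⟨θ * D, ⟨mul_nonneg hθ.1 hDpos.le, ?_⟩, ?_⟩
    · calc θ * D ≤ 1 * D := mul_le_mul_of_nonneg_right hθ.2 hDpos.le
      _ = D := one_mul D
    · rw [hpoint (θ * D) ⟨mul_nonneg hθ.1 hDpos.le, by nlinarith [hθ.2]⟩,
        mul_div_assoc, div_self hDpos.ne', mul_one, Complex.real_smul]
end
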